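/- arXiv:2309.06058 — 6 statements merged into one kernel-verified Lean document; each statement's English description precedes it below -/
import Mathlib

section
/- Let Ω ⊆ ℝ^N be an open bounded set and 0 < β ≤ 1. Let u : Ω → ℝ satisfy [u]_{C^{0,β}(Ω)} < ∞ and [u]_{W^{β,q}(Ω)} < ∞ for some 1 ≤ q < ∞. Then for every p > q, [u]_{W^{β,p}(Ω)}^p ≤ ([u]_{C^{0,β}(Ω)})^{p-q} · [u]_{W^{β,q}(Ω)}^q, and consequently lim_{p→∞} [u]_{W^{β,p}(Ω)} = [u]_{C^{0,β}(Ω)} (assuming also the liminf lower bound from the fractional seminorm limit). -/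
open MeasureTheory ENNReal Filter Metric Set

noncomputable section

abbrev Euc (N : ℕ) := EuclideanSpace ℝ (Fin N)

/-- Homogeneous Hölder seminorm `[u]_{C^{0,α}(Ω)}`, `ℝ≥0∞`-valued. -/
noncomputable def holderSemi {N : ℕ} (Ω : Set (Euc N)) (α : ℝ) (u : Euc N → ℝ) : ℝ≥0∞ :=
  ⨆ (x : Ω) (y : Ω) (_ : x.1 ≠ y.1),
    ENNReal.ofReal (|u x.1 - u y.1| / ‖x.1 - y.1‖ ^ α)

/-- `p`-th power of the Gagliardo seminorm `[u]_{W^{s,p}(Ω)}^p`. -/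
noncomputable def gagliardoP {N : ℕ} (Ω : Set (Euc N)) (s p : ℝ) (u : Euc N → ℝ) : ℝ≥0∞ :=
  ∫⁻ x in Ω, ∫⁻ y in Ω,
    ENNReal.ofReal (|u x - u y| ^ p / ‖x - y‖ ^ ((N : ℝ) + s * p))

/-- Gagliardo seminorm `[u]_{W^{s,p}(Ω)}`. -/
noncomputable def gagliardoSemi {N : ℕ} (Ω : Set (Euc N)) (s p : ℝ) (u : Euc N → ℝ) : ℝ≥0∞ :=
  gagliardoP Ω s p u ^ (1 / p)

/-!
The Hölder bound `|u x - u y| ≤ [u]_{C^{0,β}} |x - y|^β` makes the `W^{β,p}` integrand at most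
`[u]_{C^{0,β}}^{p-q}` times the `W^{β,q}` integrand; integrating gives the interpolation bound,
whose `p`-th root tends to `[u]_{C^{0,β}}`. Conversely, if the Hölder quotient at `(x, y)`
exceeds `t`, then by continuity of `u` it exceeds `t` on a product of small balls around `x`
and `y`, so `[u]_{W^{β,p}}^p ≥ t^p W` for a constant `W ∈ (0, ∞)`, and `W^{1/p} → 1`.
-/

open Topology

namespace ENNReal

theorem tendsto_const_rpow {ι : Type*} {l : Filter ι} {c : ℝ≥0∞} (hc0 : c ≠ 0) (hct : c ≠ ⊤)
    {e : ι → ℝ} {r : ℝ} (he : Tendsto e l (𝓝 r)) :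
    Tendsto (fun i => c ^ e i) l (𝓝 (c ^ r)) := by
  have hc : 0 < c.toReal := toReal_pos hc0 hct
  rw [← ofReal_toReal hct]
  simp only [ofReal_rpow_of_pos hc]
  exact (ENNReal.continuous_ofReal.tendsto _).comp
    ((Real.continuousAt_const_rpow hc.ne').tendsto.comp he)

theorem tendsto_rpow_one_div_atTop {c : ℝ≥0∞} (hc0 : c ≠ 0) (hct : c ≠ ⊤) :
    Tendsto (fun p : ℝ => c ^ (1 / p)) atTop (𝓝 1) := by
  simpa [one_div] using tendsto_const_rpow hc0 hct tendsto_inv_atTop_zero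

theorem eventually_lt_rpow_one_div {f : ℝ → ℝ≥0∞} {b c W : ℝ≥0∞} (hbc : b < c) (hW0 : W ≠ 0)
    (hWt : W ≠ ⊤) (hf : ∀ᶠ p in atTop, c ^ p * W ≤ f p) :
    ∀ᶠ p in atTop, b < f p ^ (1 / p) := by
  have hlim : Tendsto (fun p : ℝ => c * W ^ (1 / p)) atTop (𝓝 c) := by
    simpa using ENNReal.Tendsto.const_mul (tendsto_rpow_one_div_atTop hW0 hWt)
      (Or.inl one_ne_zero)
  filter_upwards [hlim.eventually_const_lt hbc, hf, eventually_gt_atTop 0] with p hlt hle hp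
  have hp' : 0 ≤ 1 / p := (one_div_pos.2 hp).le
  calc b < c * W ^ (1 / p) := hlt
    _ = (c ^ p * W) ^ (1 / p) := by
      rw [mul_rpow_of_nonneg _ _ hp', ← rpow_mul, mul_one_div_cancel hp.ne', rpow_one]
    _ ≤ f p ^ (1 / p) := rpow_le_rpow hle hp'

theorem eventually_rpow_one_div_lt {f : ℝ → ℝ≥0∞} {H G a : ℝ≥0∞} {q : ℝ} (hHt : H ≠ ⊤)
    (hGt : G ≠ ⊤) (ha : H < a) (hf : ∀ᶠ p in atTop, f p ≤ H ^ (p - q) * G) :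
    ∀ᶠ p in atTop, f p ^ (1 / p) < a := by
  have hbound : ∀ᶠ p in atTop, f p ^ (1 / p) ≤ H ^ ((p - q) * (1 / p)) * G ^ (1 / p) := by
    filter_upwards [hf, eventually_gt_atTop 0] with p hle hp
    rw [rpow_mul, ← mul_rpow_of_nonneg _ _ (one_div_pos.2 hp).le]
    exact rpow_le_rpow hle (one_div_pos.2 hp).le
  by_cases hdeg : H = 0 ∨ G = 0
  · filter_upwards [hbound, eventually_gt_atTop (max q 0)] with p hle hp
    have hp0 : 0 < p := (le_max_right q 0).trans_lt hp
    have hzero : H ^ ((p - q) * (1 / p)) * G ^ (1 / p) = 0 := by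
      rcases hdeg with rfl | rfl
      · have : 0 < (p - q) * (1 / p) :=
          _root_.mul_pos (sub_pos.2 ((le_max_left q 0).trans_lt hp)) (one_div_pos.2 hp0)
        rw [zero_rpow_of_pos this, zero_mul]
      · rw [zero_rpow_of_pos (one_div_pos.2 hp0), mul_zero]
    rw [hzero] at hle
    exact hle.trans_lt (pos_of_gt ha)
  · push Not at hdeg
    have he : Tendsto (fun p : ℝ => (p - q) * (1 / p)) atTop (𝓝 1) := by
      have h : Tendsto (fun p : ℝ => 1 - q * p⁻¹) atTop (𝓝 (1 - q * 0)) :=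
        tendsto_const_nhds.sub (tendsto_const_nhds.mul tendsto_inv_atTop_zero)
      rw [mul_zero, sub_zero] at h
      refine h.congr' ((eventually_ne_atTop 0).mono fun p hp => ?_)
      field_simp
    have hlim := ENNReal.Tendsto.mul (tendsto_const_rpow hdeg.1 hHt he) (Or.inr one_ne_top)
      (tendsto_rpow_one_div_atTop hdeg.2 hGt) (Or.inl one_ne_zero)
    rw [rpow_one, mul_one] at hlim
    filter_upwards [hbound, hlim.eventually_lt_const ha] with p hle hlt
    exact hle.trans_lt hlt

end ENNReal

def holderQuotient {N : ℕ} (s : ℝ) (u : Euc N → ℝ) (x y : Euc N) : ℝ :=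
  |u x - u y| / ‖x - y‖ ^ s

def gagliardoKernel {N : ℕ} (s p : ℝ) (u : Euc N → ℝ) (x y : Euc N) : ℝ≥0∞ :=
  ENNReal.ofReal (|u x - u y| ^ p / ‖x - y‖ ^ ((N : ℝ) + s * p))

section

variable {N : ℕ} {Ω : Set (Euc N)} {u : Euc N → ℝ} {s p q : ℝ} {x y : Euc N}

theorem holderQuotient_self : holderQuotient s u x x = 0 := by
  simp [holderQuotient]

theorem holderQuotient_nonneg : 0 ≤ holderQuotient s u x y :=
  div_nonneg (abs_nonneg _) (Real.rpow_nonneg (norm_nonneg _) _)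

theorem ofReal_holderQuotient_le_holderSemi (hx : x ∈ Ω) (hy : y ∈ Ω) :
    ENNReal.ofReal (holderQuotient s u x y) ≤ holderSemi Ω s u := by
  rcases eq_or_ne x y with rfl | hxy
  · simp [holderQuotient_self]
  · exact le_iSup₂_of_le (⟨x, hx⟩ : Ω) (⟨y, hy⟩ : Ω) (le_iSup_of_le hxy le_rfl)

theorem exists_lt_ofReal_holderQuotient {b : ℝ≥0∞} (hb : b < holderSemi Ω s u) :
    ∃ x ∈ Ω, ∃ y ∈ Ω, x ≠ y ∧ b < ENNReal.ofReal (holderQuotient s u x y) := by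
  simp only [holderSemi, lt_iSup_iff] at hb
  obtain ⟨⟨x, hx⟩, ⟨y, hy⟩, hxy, hb⟩ := hb
  exact ⟨x, hx, y, hy, hxy, hb⟩

theorem holderOnWith_holderSemi (hs : 0 ≤ s) (hH : holderSemi Ω s u ≠ ⊤) :
    HolderOnWith (holderSemi Ω s u).toNNReal s.toNNReal u Ω := by
  intro x hx y hy
  rcases eq_or_ne x y with rfl | hxy
  · simp
  have hd : 0 < ‖x - y‖ := norm_sub_pos_iff.2 hxy
  rw [coe_toNNReal hH, Real.coe_toNNReal s hs, edist_dist, edist_dist, Real.dist_eq,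
    dist_eq_norm, ofReal_rpow_of_pos hd]
  calc ENNReal.ofReal |u x - u y|
      = ENNReal.ofReal (holderQuotient s u x y) * ENNReal.ofReal (‖x - y‖ ^ s) := by
        rw [← ofReal_mul holderQuotient_nonneg, holderQuotient,
          div_mul_cancel₀ _ (Real.rpow_pos_of_pos hd s).ne']
    _ ≤ holderSemi Ω s u * ENNReal.ofReal (‖x - y‖ ^ s) := by
      gcongr
      exact ofReal_holderQuotient_le_holderSemi hx hy

theorem continuousOn_of_holderSemi_ne_top (hs : 0 < s) (hH : holderSemi Ω s u ≠ ⊤) :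
    ContinuousOn u Ω :=
  (holderOnWith_holderSemi hs.le hH).continuousOn (Real.toNNReal_pos.2 hs)

theorem gagliardoP_eq : gagliardoP Ω s p u = ∫⁻ x in Ω, ∫⁻ y in Ω, gagliardoKernel s p u x y :=
  rfl

theorem gagliardoKernel_eq_holderQuotient_rpow_div (hxy : x ≠ y) :
    gagliardoKernel s p u x y =
      ENNReal.ofReal (holderQuotient s u x y ^ p / ‖x - y‖ ^ (N : ℝ)) := by
  have hd : 0 < ‖x - y‖ := norm_sub_pos_iff.2 hxy
  rw [gagliardoKernel, holderQuotient, Real.div_rpow (abs_nonneg _) (Real.rpow_nonneg hd.le _),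
    ← Real.rpow_mul hd.le, div_div, ← Real.rpow_add hd, add_comm (s * p)]

theorem gagliardoKernel_le_holderSemi_rpow_mul (hx : x ∈ Ω) (hy : y ∈ Ω) (hq : 0 < q)
    (hqp : q ≤ p) :
    gagliardoKernel s p u x y ≤ holderSemi Ω s u ^ (p - q) * gagliardoKernel s q u x y := by
  rcases eq_or_ne x y with rfl | hxy
  · simp [gagliardoKernel, Real.zero_rpow (hq.trans_le hqp).ne']
  set r := holderQuotient s u x y
  have hr : 0 ≤ r := holderQuotient_nonneg
  have hsplit : r ^ p / ‖x - y‖ ^ (N : ℝ) = r ^ (p - q) * (r ^ q / ‖x - y‖ ^ (N : ℝ)) := by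
    rw [mul_div_assoc', ← Real.rpow_add' hr (by simpa using (hq.trans_le hqp).ne'),
      sub_add_cancel]
  simp only [gagliardoKernel_eq_holderQuotient_rpow_div hxy]
  rw [hsplit, ofReal_mul (Real.rpow_nonneg hr _), ← ofReal_rpow_of_nonneg hr (sub_nonneg.2 hqp)]
  gcongr
  exact ofReal_holderQuotient_le_holderSemi hx hy

theorem gagliardoP_le_holderSemi_rpow_mul (hΩ : MeasurableSet Ω) (hH : holderSemi Ω s u ≠ ⊤)
    (hq : 0 < q) (hqp : q ≤ p) :
    gagliardoP Ω s p u ≤ holderSemi Ω s u ^ (p - q) * gagliardoP Ω s q u := by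
  have hHpq : holderSemi Ω s u ^ (p - q) ≠ ⊤ := rpow_ne_top_of_nonneg (sub_nonneg.2 hqp) hH
  rw [gagliardoP_eq, gagliardoP_eq, ← lintegral_const_mul' _ _ hHpq]
  refine setLIntegral_mono' hΩ fun x hx => ?_
  rw [← lintegral_const_mul' _ _ hHpq]
  exact setLIntegral_mono' hΩ fun y hy => gagliardoKernel_le_holderSemi_rpow_mul hx hy hq hqp

theorem eventually_gagliardoSemi_lt (hΩ : MeasurableSet Ω) (hq : 0 < q)
    (hH : holderSemi Ω s u ≠ ⊤) (hG : gagliardoP Ω s q u ≠ ⊤) {a : ℝ≥0∞}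
    (ha : holderSemi Ω s u < a) : ∀ᶠ p in atTop, gagliardoSemi Ω s p u < a :=
  eventually_rpow_one_div_lt (f := fun p => gagliardoP Ω s p u) hH hG ha
    ((eventually_ge_atTop q).mono fun _ hp => gagliardoP_le_holderSemi_rpow_mul hΩ hH hq hp)

theorem continuousAt_holderQuotient (hΩ : IsOpen Ω) (hu : ContinuousOn u Ω) (hx : x ∈ Ω)
    (hy : y ∈ Ω) (hxy : x ≠ y) :
    ContinuousAt (fun z : Euc N × Euc N => holderQuotient s u z.1 z.2) (x, y) := by
  have hd : 0 < ‖x - y‖ := norm_sub_pos_iff.2 hxy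
  have hux : ContinuousAt (fun z : Euc N × Euc N => u z.1) (x, y) :=
    (hu.continuousAt (hΩ.mem_nhds hx)).comp continuousAt_fst
  have huy : ContinuousAt (fun z : Euc N × Euc N => u z.2) (x, y) :=
    (hu.continuousAt (hΩ.mem_nhds hy)).comp continuousAt_snd
  exact (hux.sub huy).abs.div
    ((continuousAt_fst.sub continuousAt_snd).norm.rpow_const (Or.inl hd.ne'))
    (Real.rpow_pos_of_pos hd s).ne'

theorem exists_balls_lt_holderQuotient (hΩ : IsOpen Ω) (hu : ContinuousOn u Ω) (hx : x ∈ Ω)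
    (hy : y ∈ Ω) (hxy : x ≠ y) {t : ℝ} (ht : t < holderQuotient s u x y) :
    ∃ δ > 0, ball x δ ⊆ Ω ∧ ball y δ ⊆ Ω ∧ ∀ x' ∈ ball x δ, ∀ y' ∈ ball y δ,
      t < holderQuotient s u x' y' ∧ ‖x' - y'‖ < 2 * ‖x - y‖ := by
  have hd : 0 < ‖x - y‖ := norm_sub_pos_iff.2 hxy
  have hev : ∀ᶠ z : Euc N × Euc N in 𝓝 (x, y), z.1 ∈ Ω ∧ z.2 ∈ Ω ∧
      t < holderQuotient s u z.1 z.2 ∧ ‖z.1 - z.2‖ < 2 * ‖x - y‖ :=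
    ((continuousAt_fst (p := (x, y))).eventually_mem (hΩ.mem_nhds hx)).and <|
      ((continuousAt_snd (p := (x, y))).eventually_mem (hΩ.mem_nhds hy)).and <|
        ((continuousAt_holderQuotient hΩ hu hx hy hxy).eventually_const_lt ht).and <|
          (continuous_fst.sub continuous_snd).norm.continuousAt.eventually_lt_const
            (show ‖x - y‖ < 2 * ‖x - y‖ by linarith)
  obtain ⟨δ, hδ, hball⟩ := Metric.eventually_nhds_iff_ball.1 hev
  have hmem : ∀ x' ∈ ball x δ, ∀ y' ∈ ball y δ, (x', y') ∈ ball (x, y) δ := fun x' hx' y' hy' =>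
    ball_prod_same x y δ ▸ mk_mem_prod hx' hy'
  exact ⟨δ, hδ, fun x' hx' => (hball _ (hmem x' hx' y (mem_ball_self hδ))).1,
    fun y' hy' => (hball _ (hmem x (mem_ball_self hδ) y' hy')).2.1,
    fun x' hx' y' hy' => (hball _ (hmem x' hx' y' hy')).2.2⟩

theorem ofReal_rpow_mul_le_gagliardoKernel {t D : ℝ} (ht : 0 ≤ t)
    (htq : t < holderQuotient s u x y) (hD : ‖x - y‖ ≤ D) (hp : 0 ≤ p) :
    ENNReal.ofReal t ^ p * ENNReal.ofReal (D ^ (N : ℝ))⁻¹ ≤ gagliardoKernel s p u x y := by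
  have hxy : x ≠ y := by
    rintro rfl
    rw [holderQuotient_self] at htq
    linarith
  have hd : 0 < ‖x - y‖ := norm_sub_pos_iff.2 hxy
  rw [gagliardoKernel_eq_holderQuotient_rpow_div hxy, ofReal_rpow_of_nonneg ht hp,
    ← ofReal_mul (by positivity), ← div_eq_mul_inv]
  gcongr
  exact Real.rpow_nonneg holderQuotient_nonneg p

theorem exists_rpow_mul_le_gagliardoP (hΩ : IsOpen Ω) (hu : ContinuousOn u Ω) {b : ℝ≥0∞}
    (hb : b < holderSemi Ω s u) :
    ∃ c W : ℝ≥0∞, b < c ∧ W ≠ 0 ∧ W ≠ ⊤ ∧ ∀ p, 0 ≤ p → c ^ p * W ≤ gagliardoP Ω s p u := by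
  obtain ⟨x, hx, y, hy, hxy, hbxy⟩ := exists_lt_ofReal_holderQuotient hb
  obtain ⟨t, ht0, hbt, htxy⟩ := ENNReal.lt_iff_exists_real_btwn.1 hbxy
  have ht : t < holderQuotient s u x y := (ofReal_lt_ofReal_iff'.1 htxy).1
  obtain ⟨δ, hδ, hBx, hBy, hnear⟩ := exists_balls_lt_holderQuotient hΩ hu hx hy hxy ht
  set D := 2 * ‖x - y‖
  have hD : 0 < D := mul_pos two_pos (norm_sub_pos_iff.2 hxy)
  refine ⟨ENNReal.ofReal t, ENNReal.ofReal (D ^ (N : ℝ))⁻¹ * volume (ball y δ) *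
    volume (ball x δ), hbt, ?_, ?_, fun p hp => ?_⟩
  · exact mul_ne_zero (mul_ne_zero (ofReal_pos.2 (by positivity)).ne'
      (measure_ball_pos volume y hδ).ne') (measure_ball_pos volume x hδ).ne'
  · exact mul_ne_top (mul_ne_top ofReal_ne_top measure_ball_lt_top.ne) measure_ball_lt_top.ne
  calc ENNReal.ofReal t ^ p * (ENNReal.ofReal (D ^ (N : ℝ))⁻¹ * volume (ball y δ) *
        volume (ball x δ))
      = ∫⁻ _ in ball x δ, ∫⁻ _ in ball y δ,
          ENNReal.ofReal t ^ p * ENNReal.ofReal (D ^ (N : ℝ))⁻¹ := by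
        rw [setLIntegral_const, setLIntegral_const]
        ring
    _ ≤ ∫⁻ x' in ball x δ, ∫⁻ y' in ball y δ, gagliardoKernel s p u x' y' :=
        setLIntegral_mono' measurableSet_ball fun x' hx' =>
          setLIntegral_mono' measurableSet_ball fun y' hy' =>
            ofReal_rpow_mul_le_gagliardoKernel ht0 (hnear x' hx' y' hy').1
              (hnear x' hx' y' hy').2.le hp
    _ ≤ ∫⁻ x' in ball x δ, ∫⁻ y' in Ω, gagliardoKernel s p u x' y' :=
        lintegral_mono fun _ => lintegral_mono_set hBy
    _ ≤ gagliardoP Ω s p u := lintegral_mono_set hBx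

theorem eventually_lt_gagliardoSemi (hΩ : IsOpen Ω) (hu : ContinuousOn u Ω) {b : ℝ≥0∞}
    (hb : b < holderSemi Ω s u) : ∀ᶠ p in atTop, b < gagliardoSemi Ω s p u := by
  obtain ⟨c, W, hbc, hW0, hWt, hle⟩ := exists_rpow_mul_le_gagliardoP hΩ hu hb
  exact eventually_lt_rpow_one_div (f := fun p => gagliardoP Ω s p u) hbc hW0 hWt
    ((eventually_ge_atTop 0).mono hle)

end

theorem stmt_3_general {N : ℕ} (Ω : Set (Euc N)) (hΩ : IsOpen Ω)
    (β : ℝ) (hβ : 0 < β)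
    (q : ℝ) (hq : 1 ≤ q) (u : Euc N → ℝ)
    (hhol : holderSemi Ω β u ≠ ⊤) (hgag : gagliardoP Ω β q u ≠ ⊤) :
    (∀ p : ℝ, q < p →
      gagliardoP Ω β p u ≤ holderSemi Ω β u ^ (p - q) * gagliardoP Ω β q u) ∧
    Tendsto (fun p : ℝ => gagliardoSemi Ω β p u) atTop (nhds (holderSemi Ω β u)) := by
  have hq0 : 0 < q := one_pos.trans_le hq
  refine ⟨fun p hp => gagliardoP_le_holderSemi_rpow_mul hΩ.measurableSet hhol hq0 hp.le,
    tendsto_order.2 ⟨fun b hb => ?_, fun a ha => ?_⟩⟩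
  · exact eventually_lt_gagliardoSemi hΩ (continuousOn_of_holderSemi_ne_top hβ hhol) hb
  · exact eventually_gagliardoSemi_lt hΩ.measurableSet hq0 hhol hgag ha

/-- Interpolation bound for the Gagliardo seminorm against the Hölder seminorm,
and convergence of `[u]_{W^{β,p}(Ω)}` to `[u]_{C^{0,β}(Ω)}` as `p → ∞`. -/
theorem stmt_3 {N : ℕ} (Ω : Set (Euc N)) (hΩ : IsOpen Ω)
    (hΩbd : Bornology.IsBounded Ω) (β : ℝ) (hβ : 0 < β) (hβ1 : β ≤ 1)
    (q : ℝ) (hq : 1 ≤ q) (u : Euc N → ℝ)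
    (hhol : holderSemi Ω β u ≠ ⊤) (hgag : gagliardoP Ω β q u ≠ ⊤) :
    (∀ p : ℝ, q < p →
      gagliardoP Ω β p u ≤ holderSemi Ω β u ^ (p - q) * gagliardoP Ω β q u) ∧
    Tendsto (fun p : ℝ => gagliardoSemi Ω β p u) atTop (nhds (holderSemi Ω β u)) :=
  stmt_3_general Ω hΩ β hβ q hq u hhol hgag
end
end

section
/- Let 0 < t < 1 and let Ω ⊆ ℝ^N be an open set. Suppose u ∈ W^{t,q}(Ω) for every 1 ≤ q < ∞ and L := liminf_{q→∞} [u]_{W^{t,q}(Ω)} < +∞. Then u agrees almost everywhere with a function ũ satisfying [ũ]_{C^{0,t}(Ω)} ≤ L. -/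
open MeasureTheory ENNReal Filter Metric Set

noncomputable section

/-!
For closed balls `B₁ = B(x, r)`, `B₂ = B(y, ρ)` inside `Ω`, Jensen's inequality for the normalized
measures on `B₁` and `B₂`, together with `‖z - w‖ ≤ D := dist x y + r + ρ` on `B₁ × B₂`, gives
`|⨍_{B₁} u - ⨍_{B₂} u| ≤ (|B₁| |B₂|)^{-1/q} D^{N/q} D^t [u]_{W^{t,q}(Ω)}`.
Letting `q → ∞` the volume factor tends to `1`, so `|⨍_{B₁} u - ⨍_{B₂} u| ≤ L D^t`.
Hence the averages of `u` over shrinking balls converge at every point of `Ω`; their limit `ũ`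
inherits `|ũ x - ũ y| ≤ L ‖x - y‖^t`, and it agrees with `u` at Lebesgue points.
-/

open Topology

lemma ENNReal.mul_rpow_mul_rpow_one_div (a b c : ℝ≥0∞) {q : ℝ} (hq : 0 < q) :
    (a * (b ^ q * c)) ^ (1 / q) = a ^ (1 / q) * b * c ^ (1 / q) := by
  rw [ENNReal.mul_rpow_of_nonneg _ _ (by positivity),
    ENNReal.mul_rpow_of_nonneg _ _ (by positivity), ← ENNReal.rpow_mul,
    mul_one_div_cancel hq.ne', ENNReal.rpow_one, mul_assoc]

lemma ENNReal.tendsto_rpow_one_div_atTop_s4 {c : ℝ≥0∞} (hc0 : c ≠ 0) (hc : c ≠ ⊤) :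
    Tendsto (fun q : ℝ => c ^ (1 / q)) atTop (𝓝 1) := by
  lift c to NNReal using hc
  have hc0' : c ≠ 0 := by exact_mod_cast hc0
  have h := (tendsto_const_nhds (x := c)).nnrpow
    ((tendsto_const_nhds (x := (1 : ℝ))).div_atTop tendsto_id) (.inl hc0')
  rw [NNReal.rpow_zero] at h
  simpa [ENNReal.coe_rpow_of_ne_zero hc0'] using ENNReal.tendsto_coe.2 h

lemma ENNReal.le_mul_liminf_of_le_rpow_one_div_mul {a b c : ℝ≥0∞} {g : ℝ → ℝ≥0∞}
    (hc0 : c ≠ 0) (hc : c ≠ ⊤) (hb : b ≠ ⊤) (hg : liminf g atTop ≠ ⊤)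
    (h : ∀ᶠ q in atTop, a ≤ c ^ (1 / q) * b * g q) : a ≤ b * liminf g atTop := by
  have hlim : Tendsto (fun q : ℝ => c ^ (1 / q) * b) atTop (𝓝 b) := by
    simpa using ENNReal.Tendsto.mul_const (ENNReal.tendsto_rpow_one_div_atTop_s4 hc0 hc) (.inr hb)
  calc a ≤ liminf (fun q => c ^ (1 / q) * b * g q) atTop := le_liminf_of_le (by isBoundedDefault) h
    _ ≤ limsup (fun q : ℝ => c ^ (1 / q) * b) atTop * liminf g atTop :=
        ENNReal.liminf_mul_le (.inr hg) (.inl (hlim.limsup_eq.symm ▸ hb))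
    _ = b * liminf g atTop := by rw [hlim.limsup_eq]

section ProbabilityAverages

variable {α β : Type*} [MeasurableSpace α] [MeasurableSpace β]

lemma lintegral_le_lintegral_rpow_one_div (μ : Measure α) [IsProbabilityMeasure μ] {q : ℝ}
    (hq : 1 < q) {g : α → ℝ≥0∞} (hg : AEMeasurable g μ) :
    ∫⁻ a, g a ∂μ ≤ (∫⁻ a, g a ^ q ∂μ) ^ (1 / q) := by
  simpa using ENNReal.lintegral_mul_le_Lp_mul_Lq μ (Real.HolderConjugate.conjExponent hq) hg
    aemeasurable_const (g := fun _ => 1)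

lemma lintegral_lintegral_le_rpow_one_div (μ : Measure α) (ν : Measure β)
    [IsProbabilityMeasure μ] [IsProbabilityMeasure ν] {q : ℝ} (hq : 1 < q)
    {F : α × β → ℝ≥0∞} (hF : AEMeasurable F (μ.prod ν)) :
    ∫⁻ z, ∫⁻ w, F (z, w) ∂ν ∂μ ≤ (∫⁻ z, ∫⁻ w, F (z, w) ^ q ∂ν ∂μ) ^ (1 / q) := by
  rw [← lintegral_prod _ hF, ← lintegral_prod _ (hF.pow_const q)]
  exact lintegral_le_lintegral_rpow_one_div _ hq hF

variable {E : Type*} [NormedAddCommGroup E] [NormedSpace ℝ E] [CompleteSpace E]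

lemma enorm_integral_sub_le (μ : Measure α) [IsProbabilityMeasure μ] {f : α → E}
    (hf : Integrable f μ) (c : E) : ‖∫ z, f z ∂μ - c‖ₑ ≤ ∫⁻ z, ‖f z - c‖ₑ ∂μ := by
  have h : ∫ z, (f z - c) ∂μ = ∫ z, f z ∂μ - c := by
    rw [integral_sub hf (integrable_const c), integral_const, probReal_univ, one_smul]
  exact h ▸ enorm_integral_le_lintegral_enorm _

lemma enorm_integral_sub_integral_le {μ : Measure α} {ν : Measure β}
    [IsProbabilityMeasure μ] [IsProbabilityMeasure ν] {f : α → E} {g : β → E}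
    (hf : Integrable f μ) (hg : Integrable g ν) :
    ‖∫ z, f z ∂μ - ∫ w, g w ∂ν‖ₑ ≤ ∫⁻ z, ∫⁻ w, ‖f z - g w‖ₑ ∂ν ∂μ := by
  refine (enorm_integral_sub_le μ hf _).trans (lintegral_mono fun z => ?_)
  rw [enorm_sub_rev]
  refine (enorm_integral_sub_le ν hg _).trans_eq (lintegral_congr fun w => enorm_sub_rev _ _)

open ProbabilityTheory in
lemma enorm_setAverage_sub_setAverage_le_rpow {μ : Measure α} {S T : Set α}
    (hS0 : μ S ≠ 0) (hS : μ S ≠ ⊤) (hT0 : μ T ≠ 0) (hT : μ T ≠ ⊤) {q : ℝ} (hq : 1 < q)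
    {f : α → E} (hfS : IntegrableOn f S μ) (hfT : IntegrableOn f T μ) :
    ‖(⨍ z in S, f z ∂μ) - ⨍ w in T, f w ∂μ‖ₑ ≤
      ((μ S)⁻¹ * (μ T)⁻¹ * ∫⁻ z in S, ∫⁻ w in T, ‖f z - f w‖ₑ ^ q ∂μ ∂μ) ^ (1 / q) := by
  have := cond_isProbabilityMeasure_of_finite hS0 hS
  have := cond_isProbabilityMeasure_of_finite hT0 hT
  have hf₁ : Integrable f μ[|S] := hfS.smul_measure (ENNReal.inv_ne_top.2 hS0)
  have hf₂ : Integrable f μ[|T] := hfT.smul_measure (ENNReal.inv_ne_top.2 hT0)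
  have hF : AEMeasurable (fun p : α × α => ‖f p.1 - f p.2‖ₑ) (μ[|S].prod μ[|T]) :=
    (hf₁.1.comp_fst.sub hf₂.1.comp_snd).enorm
  rw [setAverage_eq', setAverage_eq']
  calc ‖∫ z, f z ∂μ[|S] - ∫ w, f w ∂μ[|T]‖ₑ
      ≤ ∫⁻ z, ∫⁻ w, ‖f z - f w‖ₑ ∂μ[|T] ∂μ[|S] := enorm_integral_sub_integral_le hf₁ hf₂
    _ ≤ (∫⁻ z, ∫⁻ w, ‖f z - f w‖ₑ ^ q ∂μ[|T] ∂μ[|S]) ^ (1 / q) :=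
        lintegral_lintegral_le_rpow_one_div _ _ hq hF
    _ = _ := by
        simp only [ProbabilityTheory.cond, lintegral_smul_measure, smul_eq_mul,
          lintegral_const_mul' _ _ (ENNReal.inv_ne_top.2 hT0), mul_assoc, mul_left_comm]

end ProbabilityAverages

lemma dist_le_dist_add_add_of_mem_closedBall {X : Type*} [PseudoMetricSpace X] {x y z w : X}
    {r ρ : ℝ} (hz : z ∈ closedBall x r) (hw : w ∈ closedBall y ρ) :
    dist z w ≤ dist x y + r + ρ := by
  calc dist z w ≤ dist z x + dist x y + dist y w := dist_triangle4 z x y w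
    _ ≤ r + dist x y + ρ := by
      gcongr
      exacts [mem_closedBall.1 hz, mem_closedBall'.1 hw]
    _ = dist x y + r + ρ := by ring

lemma rpow_le_mul_div_rpow {a d D p q : ℝ} (hq : 0 < q) (ha : 0 ≤ a) (hd : 0 ≤ d)
    (hdD : d ≤ D) (hp : 0 ≤ p) (h : d = 0 → a = 0) :
    a ^ q ≤ D ^ p * (a ^ q / d ^ p) := by
  rcases hd.eq_or_lt with hd0 | hd0
  · rw [h hd0.symm, Real.zero_rpow hq.ne', zero_div, mul_zero]
  · rw [mul_div_assoc', le_div_iff₀ (by positivity), mul_comm]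
    gcongr

section Gagliardo

variable {N : ℕ} {Ω : Set (Euc N)} {f : Euc N → ℝ} {s q D : ℝ}

lemma setLIntegral_setLIntegral_enorm_sub_rpow_le {S T : Set (Euc N)} (hS : S ⊆ Ω) (hT : T ⊆ Ω)
    (hSm : MeasurableSet S) (hTm : MeasurableSet T) (hs : 0 ≤ s) (hq : 0 < q)
    (hD : ∀ z ∈ S, ∀ w ∈ T, dist z w ≤ D) :
    ∫⁻ z in S, ∫⁻ w in T, ‖f z - f w‖ₑ ^ q ≤
      ENNReal.ofReal (D ^ ((N : ℝ) + s * q)) * gagliardoP Ω s q f := by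
  set p := (N : ℝ) + s * q
  have hpoint : ∀ z ∈ S, ∀ w ∈ T, ‖f z - f w‖ₑ ^ q ≤
      ENNReal.ofReal (D ^ p) * ENNReal.ofReal (|f z - f w| ^ q / ‖z - w‖ ^ p) := by
    intro z hz w hw
    rw [Real.enorm_eq_ofReal_abs, ENNReal.ofReal_rpow_of_nonneg (abs_nonneg _) hq.le,
      ← ENNReal.ofReal_mul (Real.rpow_nonneg (dist_nonneg.trans (hD z hz w hw)) _)]
    refine ENNReal.ofReal_le_ofReal (rpow_le_mul_div_rpow hq (abs_nonneg _) (norm_nonneg _)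
      ((dist_eq_norm z w).symm.trans_le (hD z hz w hw)) (by positivity) fun h => ?_)
    rw [norm_sub_eq_zero_iff.1 h, sub_self, abs_zero]
  calc ∫⁻ z in S, ∫⁻ w in T, ‖f z - f w‖ₑ ^ q
      ≤ ∫⁻ z in S, ∫⁻ w in T,
          ENNReal.ofReal (D ^ p) * ENNReal.ofReal (|f z - f w| ^ q / ‖z - w‖ ^ p) :=
        setLIntegral_mono' hSm fun z hz => setLIntegral_mono' hTm fun w hw => hpoint z hz w hw
    _ = ENNReal.ofReal (D ^ p) *
          ∫⁻ z in S, ∫⁻ w in T, ENNReal.ofReal (|f z - f w| ^ q / ‖z - w‖ ^ p) := by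
        simp_rw [lintegral_const_mul' _ _ ENNReal.ofReal_ne_top]
    _ ≤ ENNReal.ofReal (D ^ p) * gagliardoP Ω s q f := by
        gcongr
        exact (lintegral_mono fun z => lintegral_mono_set hT).trans (lintegral_mono_set hS)

lemma enorm_setAverage_sub_setAverage_le (hs : 0 ≤ s) (hq : 1 < q) (hf : IntegrableOn f Ω)
    {x y : Euc N} {r ρ : ℝ} (hr : 0 < r) (hρ : 0 < ρ)
    (hx : closedBall x r ⊆ Ω) (hy : closedBall y ρ ⊆ Ω) :
    ‖(⨍ z in closedBall x r, f z) - ⨍ w in closedBall y ρ, f w‖ₑ ≤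
      ((volume (closedBall x r))⁻¹ * (volume (closedBall y ρ))⁻¹ *
        ENNReal.ofReal ((dist x y + r + ρ) ^ (N : ℝ))) ^ (1 / q) *
      ENNReal.ofReal ((dist x y + r + ρ) ^ s) * gagliardoSemi Ω s q f := by
  set D := dist x y + r + ρ
  have hD : 0 < D := by positivity
  have hq0 : 0 < q := one_pos.trans hq
  refine (enorm_setAverage_sub_setAverage_le_rpow (measure_closedBall_pos volume x hr).ne'
    measure_closedBall_lt_top.ne (measure_closedBall_pos volume y hρ).ne'
    measure_closedBall_lt_top.ne hq (hf.mono_set hx) (hf.mono_set hy)).trans ?_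
  calc ((volume (closedBall x r))⁻¹ * (volume (closedBall y ρ))⁻¹ *
        ∫⁻ z in closedBall x r, ∫⁻ w in closedBall y ρ, ‖f z - f w‖ₑ ^ q) ^ (1 / q)
      ≤ ((volume (closedBall x r))⁻¹ * (volume (closedBall y ρ))⁻¹ *
          (ENNReal.ofReal (D ^ ((N : ℝ) + s * q)) * gagliardoP Ω s q f)) ^ (1 / q) := by
        gcongr
        exact setLIntegral_setLIntegral_enorm_sub_rpow_le hx hy measurableSet_closedBall
          measurableSet_closedBall hs hq0 fun _ hz _ hw =>
            dist_le_dist_add_add_of_mem_closedBall hz hw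
    _ = ((volume (closedBall x r))⁻¹ * (volume (closedBall y ρ))⁻¹ * ENNReal.ofReal (D ^ (N : ℝ)) *
          (ENNReal.ofReal (D ^ s) ^ q * gagliardoP Ω s q f)) ^ (1 / q) := by
        rw [Real.rpow_add hD, Real.rpow_mul hD.le, ENNReal.ofReal_mul (by positivity),
          ← ENNReal.ofReal_rpow_of_nonneg (by positivity) hq0.le]
        congr 1
        ring
    _ = _ := ENNReal.mul_rpow_mul_rpow_one_div _ _ _ hq0

lemma abs_setAverage_sub_setAverage_le (hs : 0 ≤ s) (hf : IntegrableOn f Ω)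
    (hL : liminf (fun q : ℝ => gagliardoSemi Ω s q f) atTop ≠ ⊤)
    {x y : Euc N} {r ρ : ℝ} (hr : 0 < r) (hρ : 0 < ρ)
    (hx : closedBall x r ⊆ Ω) (hy : closedBall y ρ ⊆ Ω) :
    |(⨍ z in closedBall x r, f z) - ⨍ w in closedBall y ρ, f w| ≤
      (liminf (fun q : ℝ => gagliardoSemi Ω s q f) atTop).toReal * (dist x y + r + ρ) ^ s := by
  have hD : 0 < dist x y + r + ρ := by positivity
  set c := (volume (closedBall x r))⁻¹ * (volume (closedBall y ρ))⁻¹ *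
    ENNReal.ofReal ((dist x y + r + ρ) ^ (N : ℝ))
  have hc0 : c ≠ 0 := by
    simp [c, measure_closedBall_lt_top.ne, pow_pos hD]
  have hc : c ≠ ⊤ := by
    simp [c, ENNReal.mul_eq_top, (measure_closedBall_pos volume x hr).ne',
      (measure_closedBall_pos volume y hρ).ne']
  have h := ENNReal.le_mul_liminf_of_le_rpow_one_div_mul hc0 hc ENNReal.ofReal_ne_top hL
    ((eventually_gt_atTop 1).mono fun q hq =>
      enorm_setAverage_sub_setAverage_le hs hq hf hr hρ hx hy)
  rw [Real.enorm_eq_ofReal_abs, ENNReal.ofReal_le_iff_le_toReal (ENNReal.mul_ne_top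
    ENNReal.ofReal_ne_top hL), ENNReal.toReal_mul, ENNReal.toReal_ofReal (by positivity)] at h
  rwa [mul_comm]

end Gagliardo

section LimitOfAverages

variable {X : Type*} [PseudoMetricSpace X] {Ω : Set X}

lemma eventually_nhdsGT_closedBall_subset (hΩ : IsOpen Ω) {x : X} (hx : x ∈ Ω) :
    ∀ᶠ r in 𝓝[>] (0 : ℝ), closedBall x r ⊆ Ω :=
  nhdsWithin_le_nhds (eventually_closedBall_subset (hΩ.mem_nhds hx))

lemma tendsto_mul_rpow_add_add (C d : ℝ) {t : ℝ} (ht : 0 < t) :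
    Tendsto (fun p : ℝ × ℝ => C * (d + p.1 + p.2) ^ t) (𝓝[>] 0 ×ˢ 𝓝[>] 0) (𝓝 (C * d ^ t)) := by
  have hcont : Continuous fun p : ℝ × ℝ => C * (d + p.1 + p.2) ^ t :=
    continuous_const.mul ((Real.continuous_rpow_const ht.le).comp (by fun_prop))
  simpa using (hcont.tendsto (0, 0)).mono_left
    (nhds_prod_eq (x := (0 : ℝ)) (y := (0 : ℝ)) ▸ prod_mono nhdsWithin_le_nhds nhdsWithin_le_nhds)

variable {A : X → ℝ → ℝ} {C t : ℝ}

lemma eventually_abs_sub_le_of_closedBall_subset (hΩ : IsOpen Ω)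
    (hA : ∀ x y r ρ, 0 < r → 0 < ρ → closedBall x r ⊆ Ω → closedBall y ρ ⊆ Ω →
      |A x r - A y ρ| ≤ C * (dist x y + r + ρ) ^ t)
    {x y : X} (hx : x ∈ Ω) (hy : y ∈ Ω) :
    ∀ᶠ p in 𝓝[>] (0 : ℝ) ×ˢ 𝓝[>] 0, |A x p.1 - A y p.2| ≤ C * (dist x y + p.1 + p.2) ^ t := by
  filter_upwards [(eventually_mem_nhdsWithin.and
    (eventually_nhdsGT_closedBall_subset hΩ hx)).prod_mk
      (eventually_mem_nhdsWithin.and (eventually_nhdsGT_closedBall_subset hΩ hy))]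
    with p ⟨⟨hr, hxr⟩, hρ, hyρ⟩ using hA x y p.1 p.2 hr hρ hxr hyρ

theorem exists_tendsto_nhdsGT_and_abs_sub_le (hΩ : IsOpen Ω) (ht : 0 < t)
    (hA : ∀ x y r ρ, 0 < r → 0 < ρ → closedBall x r ⊆ Ω → closedBall y ρ ⊆ Ω →
      |A x r - A y ρ| ≤ C * (dist x y + r + ρ) ^ t) :
    ∃ v : X → ℝ, (∀ x ∈ Ω, Tendsto (A x) (𝓝[>] 0) (𝓝 (v x))) ∧
      ∀ x ∈ Ω, ∀ y ∈ Ω, |v x - v y| ≤ C * dist x y ^ t := by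
  have hev := fun x (hx : x ∈ Ω) y (hy : y ∈ Ω) =>
    eventually_abs_sub_le_of_closedBall_subset hΩ hA hx hy
  have hlim : ∀ x ∈ Ω, Tendsto (A x) (𝓝[>] 0) (𝓝 (limUnder (𝓝[>] 0) (A x))) := by
    intro x hx
    refine tendsto_nhds_limUnder (cauchy_map_iff_exists_tendsto.1 ?_)
    rw [cauchy_map_iff', tendsto_uniformity_iff_dist_tendsto_zero]
    refine squeeze_zero' (.of_forall fun _ => dist_nonneg)
      ((hev x hx x hx).mono fun p hp => (Real.dist_eq _ _).trans_le hp) ?_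
    simpa [Real.zero_rpow ht.ne'] using tendsto_mul_rpow_add_add C (dist x x) ht
  refine ⟨fun x => limUnder (𝓝[>] 0) (A x), hlim, fun x hx y hy => ?_⟩
  exact le_of_tendsto_of_tendsto (((hlim x hx).comp tendsto_fst).sub ((hlim y hy).comp
    tendsto_snd)).abs (tendsto_mul_rpow_add_add C _ ht) (hev x hx y hy)

end LimitOfAverages

lemma ae_restrict_tendsto_setAverage_closedBall {α E : Type*} [MetricSpace α] [MeasurableSpace α]
    [BorelSpace α] [SecondCountableTopology α] [HasBesicovitchCovering α] {μ : Measure α}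
    [IsLocallyFiniteMeasure μ] [NormedAddCommGroup E] [NormedSpace ℝ E] [CompleteSpace E]
    {Ω : Set α} (hΩ : IsOpen Ω) {f : α → E} (hf : IntegrableOn f Ω μ) :
    ∀ᵐ x ∂μ.restrict Ω, Tendsto (fun r => ⨍ z in closedBall x r, f z ∂μ) (𝓝[>] 0) (𝓝 (f x)) := by
  have hg : LocallyIntegrable (Ω.indicator f) μ :=
    (hf.integrable_indicator hΩ.measurableSet).locallyIntegrable
  filter_upwards [ae_restrict_of_ae ((Besicovitch.vitaliFamily μ).ae_tendsto_average hg),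
    ae_restrict_mem hΩ.measurableSet] with x hx hxΩ
  have h := hx.comp (Besicovitch.tendsto_filterAt μ x)
  rw [indicator_of_mem hxΩ] at h
  refine h.congr' ?_
  filter_upwards [eventually_nhdsGT_closedBall_subset hΩ hxΩ] with r hr
  exact setAverage_congr_fun measurableSet_closedBall
    (.of_forall fun z hz => indicator_of_mem (hr hz) f)

lemma holderSemi_le_ofReal {N : ℕ} {Ω : Set (Euc N)} {t C : ℝ} {v : Euc N → ℝ}
    (h : ∀ x ∈ Ω, ∀ y ∈ Ω, |v x - v y| ≤ C * dist x y ^ t) : holderSemi Ω t v ≤ ENNReal.ofReal C :=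
  iSup_le fun x => iSup_le fun y => iSup_le fun hxy => ENNReal.ofReal_le_ofReal <| by
    rw [div_le_iff₀ (Real.rpow_pos_of_pos (norm_pos_iff.2 (sub_ne_zero.2 hxy)) t), ← dist_eq_norm]
    exact h x x.2 y y.2

theorem stmt_4_general {N : ℕ} (Ω : Set (Euc N)) (hΩ : IsOpen Ω) (t : ℝ)
    (ht0 : 0 < t) (u : Euc N → ℝ)
    (hmem : ∀ q : ℝ, 1 ≤ q → MemLp u (ENNReal.ofReal q) (volume.restrict Ω))
    (hL : Filter.liminf (fun q : ℝ => gagliardoSemi Ω t q u) atTop ≠ ⊤) :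
    ∃ v : Euc N → ℝ, (∀ᵐ x ∂(volume.restrict Ω), u x = v x) ∧
      holderSemi Ω t v ≤ Filter.liminf (fun q : ℝ => gagliardoSemi Ω t q u) atTop := by
  have hu : IntegrableOn u Ω := memLp_one_iff_integrable.1 (by simpa using hmem 1 le_rfl)
  obtain ⟨v, hv_lim, hv_holder⟩ := exists_tendsto_nhdsGT_and_abs_sub_le hΩ ht0
    fun x y r ρ hr hρ hx hy => abs_setAverage_sub_setAverage_le ht0.le hu hL hr hρ hx hy
  refine ⟨v, ?_, (holderSemi_le_ofReal hv_holder).trans_eq (ENNReal.ofReal_toReal hL)⟩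
  filter_upwards [ae_restrict_tendsto_setAverage_closedBall hΩ hu,
    ae_restrict_mem hΩ.measurableSet] with x hx hxΩ
  exact tendsto_nhds_unique hx (hv_lim x hxΩ)

/-- If the Gagliardo seminorms `[u]_{W^{t,q}(Ω)}` have finite liminf as `q → ∞`,
then `u` has a representative with Hölder seminorm bounded by that liminf. -/
theorem stmt_4 {N : ℕ} (Ω : Set (Euc N)) (hΩ : IsOpen Ω) (t : ℝ)
    (ht0 : 0 < t) (ht1 : t < 1) (u : Euc N → ℝ)
    (hmem : ∀ q : ℝ, 1 ≤ q → MemLp u (ENNReal.ofReal q) (volume.restrict Ω))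
    (hfin : ∀ q : ℝ, 1 ≤ q → gagliardoP Ω t q u ≠ ⊤)
    (hL : Filter.liminf (fun q : ℝ => gagliardoSemi Ω t q u) atTop ≠ ⊤) :
    ∃ v : Euc N → ℝ, (∀ᵐ x ∂(volume.restrict Ω), u x = v x) ∧
      holderSemi Ω t v ≤ Filter.liminf (fun q : ℝ => gagliardoSemi Ω t q u) atTop :=
  stmt_4_general Ω hΩ t ht0 u hmem hL
end
end

section
/- Let 0 < t < s < 1 and 1 ≤ q < p < ∞, and let Ω ⊆ ℝ^N be an open bounded set. Then for every u ∈ W^{s,p}(Ω), [u]_{W^{t,q}(Ω)} ≤ ( N ω_N |Ω| (p-q)/( (s-t) p q ) )^{(p-q)/(pq)} · diam(Ω)^{s-t} · [u]_{W^{s,p}(Ω)}. -/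
/-!
Write the `W^{t,q}` kernel as `K_{s,p}(x,y)^{q/p} · ‖x - y‖^{(ε - N)(p - q)/p}` with
`ε = (s - t)pq/(p - q)` and apply Hölder's inequality with exponents `p/q` and `p/(p - q)` on
`Ω × Ω`. What remains is the Riesz energy `∫_Ω ∫_Ω ‖x - y‖^{ε - N}`; since `Ω` lies in the ball of
radius `diam Ω` around each of its points, polar coordinates bound the inner integral by
`N ω_N diam(Ω)^ε / ε`.
-/

open MeasureTheory ENNReal Filter Metric Set

noncomputable section

section HaarIntegrals

variable {E : Type*} [NormedAddCommGroup E] [NormedSpace ℝ E] [MeasurableSpace E] [BorelSpace E]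
  [FiniteDimensional ℝ E] (μ : Measure E) [μ.IsAddHaarMeasure]

lemma lintegral_fun_norm_addHaar [Nontrivial E] {f : ℝ → ℝ≥0∞} (hf : Measurable f) :
    ∫⁻ x, f ‖x‖ ∂μ = Module.finrank ℝ E * μ (ball 0 1) *
      ∫⁻ r in Ioi (0 : ℝ), ENNReal.ofReal (r ^ (Module.finrank ℝ E - 1)) * f r := by
  calc ∫⁻ x, f ‖x‖ ∂μ = ∫⁻ x : ({(0 : E)}ᶜ : Set E), f ‖x.1‖ ∂(μ.comap (↑)) := by
        rw [lintegral_subtype_comap (measurableSet_singleton _).compl fun x => f ‖x‖,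
          restrict_compl_singleton]
    _ = ∫⁻ x : sphere (0 : E) 1 × Ioi (0 : ℝ), f x.2
          ∂(μ.toSphere.prod (.volumeIoiPow (Module.finrank ℝ E - 1))) := by
        simpa using (μ.measurePreserving_homeomorphUnitSphereProd.lintegral_comp_emb
          (Homeomorph.measurableEmbedding _) (fun x => f x.2.1))
    _ = μ.toSphere univ * ∫⁻ r : Ioi (0 : ℝ), f r ∂(.volumeIoiPow (Module.finrank ℝ E - 1)) := by
        rw [lintegral_prod _ (by fun_prop)]
        simp [lintegral_const, mul_comm]
    _ = _ := by
        rw [μ.toSphere_apply_univ, Measure.volumeIoiPow,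
          lintegral_withDensity_eq_lintegral_mul _ (by fun_prop) (by fun_prop)]
        exact congrArg _ (lintegral_subtype_comap measurableSet_Ioi
          fun r : ℝ => ENNReal.ofReal (r ^ (Module.finrank ℝ E - 1)) * f r)

lemma lintegral_Ioc_rpow_sub_one {ε : ℝ} (hε : 0 < ε) {D : ℝ} (hD : 0 ≤ D) :
    ∫⁻ r in Ioc 0 D, ENNReal.ofReal (r ^ (ε - 1)) = ENNReal.ofReal (D ^ ε / ε) := by
  rw [← ofReal_integral_eq_lintegral_ofReal
      (intervalIntegral.intervalIntegrable_rpow' (by linarith : (-1 : ℝ) < ε - 1)).1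
      ((ae_restrict_mem measurableSet_Ioc).mono fun r hr => Real.rpow_nonneg hr.1.le _),
    ← intervalIntegral.integral_of_le hD, integral_rpow (Or.inl (by linarith)),
    sub_add_cancel, Real.zero_rpow hε.ne', sub_zero]

lemma setLIntegral_closedBall_norm_rpow [Nontrivial E] {ε : ℝ} (hε : 0 < ε) {D : ℝ}
    (hD : 0 ≤ D) :
    ∫⁻ x in closedBall 0 D, ENNReal.ofReal (‖x‖ ^ (ε - Module.finrank ℝ E)) ∂μ =
      Module.finrank ℝ E * μ (ball 0 1) * ENNReal.ofReal (D ^ ε / ε) := by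
  set d := Module.finrank ℝ E
  have hradial : (closedBall (0 : E) D).indicator (fun x => ENNReal.ofReal (‖x‖ ^ (ε - d))) =
      fun x => (Iic D).indicator (fun r => ENNReal.ofReal (r ^ (ε - d))) ‖x‖ := by
    ext x
    simp [indicator]
  rw [← lintegral_indicator measurableSet_closedBall, hradial,
    lintegral_fun_norm_addHaar μ ((by fun_prop : Measurable _).indicator measurableSet_Iic),
    ← lintegral_Ioc_rpow_sub_one hε hD, ← Ioi_inter_Iic, inter_comm,
    ← Measure.restrict_restrict measurableSet_Iic, ← lintegral_indicator measurableSet_Iic]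
  congr 1
  refine setLIntegral_congr_fun measurableSet_Ioi fun r (hr : 0 < r) => ?_
  by_cases hrD : r ≤ D
  · have hd : 0 < d := Module.finrank_pos
    simp only [indicator_of_mem (show r ∈ Iic D from hrD)]
    rw [← ENNReal.ofReal_mul (by positivity), ← Real.rpow_natCast, ← Real.rpow_add hr,
      Nat.cast_sub hd]
    ring_nf
  · simp [indicator_of_notMem (show r ∉ Iic D from hrD)]

lemma setLIntegral_norm_sub_rpow_le {ε : ℝ} (hε : 0 < ε) {Ω : Set E}
    (hΩ : Bornology.IsBounded Ω) {x : E} (hx : x ∈ Ω) :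
    ∫⁻ y in Ω, ENNReal.ofReal (‖x - y‖ ^ (ε - Module.finrank ℝ E)) ∂μ ≤
      Module.finrank ℝ E * μ (ball 0 1) * ENNReal.ofReal (diam Ω ^ ε / ε) := by
  rcases subsingleton_or_nontrivial E with hE | hE
  · simp [Subsingleton.elim (x - _) 0, Module.finrank_zero_of_subsingleton, Real.zero_rpow hε.ne']
  calc ∫⁻ y in Ω, ENNReal.ofReal (‖x - y‖ ^ (ε - Module.finrank ℝ E)) ∂μ
      ≤ ∫⁻ y in closedBall x (diam Ω), ENNReal.ofReal (‖x - y‖ ^ (ε - Module.finrank ℝ E)) ∂μ :=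
        lintegral_mono_set fun y hy => mem_closedBall.2 (dist_le_diam_of_mem hΩ hy hx)
    _ = ∫⁻ z in closedBall 0 (diam Ω), ENNReal.ofReal (‖z‖ ^ (ε - Module.finrank ℝ E)) ∂μ := by
        rw [← (measurePreserving_add_left μ x).setLIntegral_comp_preimage_emb
          (measurableEmbedding_addLeft x), preimage_add_left_closedBall, neg_add_cancel]
        simp
    _ = _ := setLIntegral_closedBall_norm_rpow μ hε diam_nonneg

lemma lintegral_lintegral_norm_sub_rpow_le {ε : ℝ} (hε : 0 < ε) {Ω : Set E}
    (hΩ : Bornology.IsBounded Ω) :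
    ∫⁻ x in Ω, ∫⁻ y in Ω, ENNReal.ofReal (‖x - y‖ ^ (ε - Module.finrank ℝ E)) ∂μ ∂μ ≤
      ENNReal.ofReal (Module.finrank ℝ E * μ.real (ball 0 1) * μ.real Ω * (diam Ω ^ ε / ε)) := by
  calc ∫⁻ x in Ω, ∫⁻ y in Ω, ENNReal.ofReal (‖x - y‖ ^ (ε - Module.finrank ℝ E)) ∂μ ∂μ
      ≤ ∫⁻ _ in Ω, Module.finrank ℝ E * μ (ball 0 1) * ENNReal.ofReal (diam Ω ^ ε / ε) ∂μ :=
        setLIntegral_mono measurable_const fun x hx => setLIntegral_norm_sub_rpow_le μ hε hΩ hx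
    _ = _ := by
        rw [setLIntegral_const, ENNReal.ofReal_mul (by positivity),
          ENNReal.ofReal_mul (by positivity), ENNReal.ofReal_mul (by positivity),
          ENNReal.ofReal_natCast, measureReal_def,
          measureReal_def, ENNReal.ofReal_toReal measure_ball_lt_top.ne,
          ENNReal.ofReal_toReal hΩ.measure_lt_top.ne]
        ring

end HaarIntegrals

lemma rpow_div_rpow_eq_rpow_mul_rpow {a r d s t p q : ℝ} (ha : 0 ≤ a) (hr : 0 < r) (hq : 0 < q)
    (hqp : q < p) :
    a ^ q / r ^ (d + t * q) = (a ^ p / r ^ (d + s * p)) ^ (q / p) *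
      (r ^ ((s - t) * p * q / (p - q) - d)) ^ ((p - q) / p) := by
  have hp : 0 < p := hq.trans hqp
  have hpq : p - q ≠ 0 := (sub_pos.2 hqp).ne'
  rw [Real.div_rpow (by positivity) (by positivity), ← Real.rpow_mul ha, ← Real.rpow_mul hr.le,
    ← Real.rpow_mul hr.le, mul_div_cancel₀ _ hp.ne', div_eq_mul_inv, div_eq_mul_inv,
    ← Real.rpow_neg hr.le, ← Real.rpow_neg hr.le, mul_assoc, ← Real.rpow_add hr]
  congr 2
  field_simp
  ring

lemma gagliardoP_le_rpow_mul {N : ℕ} {s t p q : ℝ} (hq : 0 < q) (hqp : q < p) {Ω : Set (Euc N)}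
    {u : Euc N → ℝ} (hu : AEMeasurable u (volume.restrict Ω)) :
    gagliardoP Ω t q u ≤ gagliardoP Ω s p u ^ (q / p) *
      (∫⁻ x in Ω, ∫⁻ y in Ω, ENNReal.ofReal (‖x - y‖ ^ ((s - t) * p * q / (p - q) - N))) ^
        ((p - q) / p) := by
  have hp : 0 < p := hq.trans hqp
  set ν := (volume.restrict Ω).prod (volume.restrict Ω)
  set K : ℝ → ℝ → Euc N × Euc N → ℝ≥0∞ := fun s' p' z =>
    ENNReal.ofReal (|u z.1 - u z.2| ^ p' / ‖z.1 - z.2‖ ^ ((N : ℝ) + s' * p'))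
  set R : Euc N × Euc N → ℝ≥0∞ := fun z =>
    ENNReal.ofReal (‖z.1 - z.2‖ ^ ((s - t) * p * q / (p - q) - N))
  have hsplit (z : Euc N × Euc N) : K t q z = K s p z ^ (q / p) * R z ^ ((p - q) / p) := by
    rcases eq_or_ne z.1 z.2 with hz | hz
    · simp [K, hz, Real.zero_rpow hq.ne', Real.zero_rpow hp.ne',
        ENNReal.zero_rpow_of_pos (div_pos hq hp)]
    have hr : 0 < ‖z.1 - z.2‖ := norm_pos_iff.2 (sub_ne_zero.2 hz)
    simp only [K, R]
    rw [ENNReal.ofReal_rpow_of_nonneg (by positivity) (div_pos hq hp).le,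
      ENNReal.ofReal_rpow_of_nonneg (by positivity) (div_nonneg (sub_pos.2 hqp).le hp.le),
      ← ENNReal.ofReal_mul (by positivity),
      rpow_div_rpow_eq_rpow_mul_rpow (abs_nonneg _) hr hq hqp]
  have hK (s' p' : ℝ) : AEMeasurable (K s' p') ν := by
    have hdiff : AEMeasurable (fun z : Euc N × Euc N => u z.1 - u z.2) ν :=
      hu.comp_fst.sub hu.comp_snd
    have hdist : Measurable fun z : Euc N × Euc N => ‖z.1 - z.2‖ ^ ((N : ℝ) + s' * p') := by
      fun_prop
    exact ENNReal.measurable_ofReal.comp_aemeasurable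
      ((hdiff.abs.pow_const p').div hdist.aemeasurable)
  have hR : Measurable R := by fun_prop
  have hconj : (p / q).HolderConjugate (p / (p - q)) := by
    refine Real.holderConjugate_iff.2 ⟨(one_lt_div hq).2 hqp, ?_⟩
    field_simp
    ring
  calc gagliardoP Ω t q u = ∫⁻ z, K s p z ^ (q / p) * R z ^ ((p - q) / p) ∂ν := by
        rw [← lintegral_congr hsplit, lintegral_prod _ (hK t q)]
        rfl
    _ ≤ (∫⁻ z, (K s p z ^ (q / p)) ^ (p / q) ∂ν) ^ (q / p) *
          (∫⁻ z, (R z ^ ((p - q) / p)) ^ (p / (p - q)) ∂ν) ^ ((p - q) / p) := by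
        simpa only [one_div_div, Pi.mul_apply] using
          ENNReal.lintegral_mul_le_Lp_mul_Lq ν hconj ((hK s p).pow_const _)
            (hR.pow_const _).aemeasurable
    _ = _ := by
        have hqp' : q / p * (p / q) = 1 := by field_simp
        have hpq : (p - q) / p * (p / (p - q)) = 1 := by field_simp [(sub_pos.2 hqp).ne']
        simp_rw [← ENNReal.rpow_mul, hqp', hpq, ENNReal.rpow_one]
        rw [lintegral_prod _ (hK s p), lintegral_prod _ hR.aemeasurable]
        rfl

lemma gagliardoSemi_le_rpow_mul {N : ℕ} {s t p q : ℝ} (hq : 0 < q) (hqp : q < p)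
    {Ω : Set (Euc N)} {u : Euc N → ℝ} (hu : AEMeasurable u (volume.restrict Ω)) :
    gagliardoSemi Ω t q u ≤
      (∫⁻ x in Ω, ∫⁻ y in Ω, ENNReal.ofReal (‖x - y‖ ^ ((s - t) * p * q / (p - q) - N))) ^
        ((p - q) / (p * q)) * gagliardoSemi Ω s p u := by
  have hp : 0 < p := hq.trans hqp
  calc gagliardoSemi Ω t q u
      ≤ (gagliardoP Ω s p u ^ (q / p) *
          (∫⁻ x in Ω, ∫⁻ y in Ω, ENNReal.ofReal (‖x - y‖ ^ ((s - t) * p * q / (p - q) - N)))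
            ^ ((p - q) / p)) ^ (1 / q) :=
        ENNReal.rpow_le_rpow (gagliardoP_le_rpow_mul hq hqp hu) (by positivity)
    _ = _ := by
        rw [ENNReal.mul_rpow_of_nonneg _ _ (by positivity), ← ENNReal.rpow_mul,
          ← ENNReal.rpow_mul, mul_comm, gagliardoSemi]
        congr 2 <;> field_simp

theorem stmt_5_general {N : ℕ} (s t p q : ℝ) (hts : t < s)
    (hq : 1 ≤ q) (hqp : q < p) (Ω : Set (Euc N))
    (hΩbd : Bornology.IsBounded Ω) (u : Euc N → ℝ)
    (hmem : MemLp u (ENNReal.ofReal p) (volume.restrict Ω)) :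
    gagliardoSemi Ω t q u ≤
      ENNReal.ofReal
        (((N : ℝ) * (volume (ball (0 : Euc N) 1)).toReal * (volume Ω).toReal *
            (p - q) / ((s - t) * p * q)) ^ ((p - q) / (p * q)) *
          Metric.diam Ω ^ (s - t)) *
        gagliardoSemi Ω s p u := by
  have hq0 : 0 < q := one_pos.trans_le hq
  have hp0 : 0 < p := hq0.trans hqp
  have hst := sub_pos.2 hts
  have hpq := sub_pos.2 hqp
  set ε := (s - t) * p * q / (p - q)
  have hR := lintegral_lintegral_norm_sub_rpow_le volume (by positivity : 0 < ε) hΩbd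
  rw [finrank_euclideanSpace_fin] at hR
  refine (gagliardoSemi_le_rpow_mul (s := s) hq0 hqp hmem.1.aemeasurable).trans ?_
  gcongr
  refine (ENNReal.rpow_le_rpow hR (by positivity)).trans_eq ?_
  rw [ENNReal.ofReal_rpow_of_nonneg (by positivity) (by positivity)]
  congr 1
  have hK : (N : ℝ) * volume.real (ball (0 : Euc N) 1) * volume.real Ω * (diam Ω ^ ε / ε) =
      (N : ℝ) * (volume (ball (0 : Euc N) 1)).toReal * (volume Ω).toReal * (p - q) /
        ((s - t) * p * q) * diam Ω ^ ε := by
    simp only [ε, measureReal_def]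
    field_simp
  rw [hK, Real.mul_rpow (by positivity) (by positivity), ← Real.rpow_mul diam_nonneg]
  congr 2
  simp only [ε]
  field_simp

/-- Hölder-type inequality between Gagliardo seminorms with different parameters. -/
theorem stmt_5 {N : ℕ} (s t p q : ℝ) (ht0 : 0 < t) (hts : t < s) (hs1 : s < 1)
    (hq : 1 ≤ q) (hqp : q < p) (Ω : Set (Euc N)) (hΩ : IsOpen Ω)
    (hΩbd : Bornology.IsBounded Ω) (u : Euc N → ℝ)
    (hmem : MemLp u (ENNReal.ofReal p) (volume.restrict Ω))
    (hgag : gagliardoP Ω s p u ≠ ⊤) :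
    gagliardoSemi Ω t q u ≤
      ENNReal.ofReal
        (((N : ℝ) * (volume (ball (0 : Euc N) 1)).toReal * (volume Ω).toReal *
            (p - q) / ((s - t) * p * q)) ^ ((p - q) / (p * q)) *
          Metric.diam Ω ^ (s - t)) *
        gagliardoSemi Ω s p u :=
  stmt_5_general s t p q hts hq hqp Ω hΩbd u hmem
end
end

section
/- Let N ≥ 1, 0 < s < 1, 1 < p < ∞ with sp > N, set α = s - N/p, and define θ_{N,s,p} = ω_N · sup_{T>1} (T-1)^N / ((T-1)^s + T^s)^p. Then for every φ ∈ C_0^∞(ℝ^N), θ_{N,s,p} · Λ_{s,p}(B_1(0)) · [φ]_{C^{0,α}(ℝ^N)}^p ≤ [φ]_{W^{s,p}(ℝ^N)}^p. In particular the sharp Morrey constant 𝔪_{s,p}(ℝ^N) satisfies 𝔪_{s,p}(ℝ^N) ≥ θ_{N,s,p} Λ_{s,p}(B_1(0)). -/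
open MeasureTheory ENNReal Filter Metric Set

noncomputable section

/-- The Poincaré-type constant `Λ_{s,p}(B_r(x₀))` for punctured balls. -/
noncomputable def LambdaConst (N : ℕ) (s p : ℝ) (x₀ : Euc N) (r : ℝ) : ℝ≥0∞ :=
  sInf {m : ℝ≥0∞ | ∃ φ : Euc N → ℝ, ContDiffOn ℝ 1 φ (closure (ball x₀ r)) ∧
    (∫⁻ x in ball x₀ r, ENNReal.ofReal (|φ x| ^ p)) = 1 ∧ φ x₀ = 0 ∧
    m = gagliardoP (ball x₀ r) s p φ}

/-- The sharp Morrey constant `𝔪_{s,p}(ℝ^N)`. -/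
noncomputable def morreyConst (N : ℕ) (s p : ℝ) : ℝ≥0∞ :=
  sInf {m : ℝ≥0∞ | ∃ φ : Euc N → ℝ, ContDiff ℝ (⊤ : ℕ∞) φ ∧ HasCompactSupport φ ∧
    holderSemi Set.univ (s - N / p) φ = 1 ∧ m = gagliardoP Set.univ s p φ}

variable {N : ℕ}

def affMap (x₀ : Euc N) (ρ : ℝ) (hρ : ρ ≠ 0) : Euc N ≃ₜ Euc N :=
  (Homeomorph.smulOfNeZero ρ hρ).trans (Homeomorph.addLeft x₀)

lemma map_affMap (x₀ : Euc N) {ρ : ℝ} (hρ : 0 < ρ) :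
    volume.map (affMap x₀ ρ hρ.ne') = ENNReal.ofReal ((ρ ^ N)⁻¹) • volume := by
  have h1 : (affMap x₀ ρ hρ.ne' : Euc N → Euc N) = (fun y => x₀ + y) ∘ (fun x : Euc N => ρ • x) := rfl
  have h2 := Measure.map_addHaar_smul (μ := (volume : Measure (Euc N))) hρ.ne'
  rw [h1, ← Measure.map_map (measurable_const_add x₀) (measurable_const_smul ρ), h2,
    Measure.map_smul, map_add_left_eq_self]
  congr 1
  rw [abs_of_nonneg (by positivity), finrank_euclideanSpace_fin]

lemma lintegral_affMap (x₀ : Euc N) {ρ : ℝ} (hρ : 0 < ρ) (g : Euc N → ℝ≥0∞)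
    {A : Set (Euc N)} (hA : MeasurableSet A) :
    ∫⁻ u in A, g u = ENNReal.ofReal (ρ ^ N) *
      ∫⁻ x in (fun x : Euc N => x₀ + ρ • x) ⁻¹' A, g (x₀ + ρ • x) := by
  have key : ∫⁻ x in (fun x : Euc N => x₀ + ρ • x) ⁻¹' A, g (x₀ + ρ • x)
      = ENNReal.ofReal ((ρ ^ N)⁻¹) * ∫⁻ u in A, g u := by
    calc ∫⁻ x in (fun x : Euc N => x₀ + ρ • x) ⁻¹' A, g (x₀ + ρ • x)
        = ∫⁻ u, g u ∂(Measure.map (affMap x₀ ρ hρ.ne').toMeasurableEquiv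
            (volume.restrict ((affMap x₀ ρ hρ.ne').toMeasurableEquiv ⁻¹' A))) := by
          rw [MeasureTheory.lintegral_map_equiv]; rfl
      _ = ∫⁻ u in A, g u ∂(volume.map (affMap x₀ ρ hρ.ne').toMeasurableEquiv) := by
          rw [Measure.restrict_map (affMap x₀ ρ hρ.ne').toMeasurableEquiv.measurable hA]
      _ = ENNReal.ofReal ((ρ ^ N)⁻¹) * ∫⁻ u in A, g u := by
          have h3 : volume.map ((affMap x₀ ρ hρ.ne').toMeasurableEquiv : Euc N → Euc N)
              = ENNReal.ofReal ((ρ ^ N)⁻¹) • volume := map_affMap x₀ hρ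
          rw [h3, Measure.restrict_smul, lintegral_smul_measure, smul_eq_mul]
  rw [key, ← mul_assoc, ← ENNReal.ofReal_mul (by positivity), mul_inv_cancel₀ (by positivity),
    ENNReal.ofReal_one, one_mul]

lemma preimage_affMap_ball (x₀ : Euc N) {ρ : ℝ} (hρ : 0 < ρ) :
    (fun x : Euc N => x₀ + ρ • x) ⁻¹' (ball x₀ ρ) = ball (0 : Euc N) 1 := by
  ext x
  simp only [mem_preimage, mem_ball, dist_eq_norm, add_sub_cancel_left, norm_smul,
    Real.norm_eq_abs, abs_of_pos hρ, sub_zero]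
  constructor
  · intro h; nlinarith [norm_nonneg x]
  · intro h; nlinarith [norm_nonneg x]

/-- Scaling lemma: Poincaré inequality on an arbitrary ball from `LambdaConst`. -/
lemma L1 {s p : ℝ} (hs0 : 0 < s) (hp : 1 < p) (x₀ : Euc N) {ρ : ℝ} (hρ : 0 < ρ)
    (ψ : Euc N → ℝ) (hψ : ContDiff ℝ 1 ψ) (h0 : ψ x₀ = 0) :
    LambdaConst N s p 0 1 * ∫⁻ x in ball x₀ ρ, ENNReal.ofReal (|ψ x| ^ p) ≤
      ENNReal.ofReal (ρ ^ (s * p)) * gagliardoP (ball x₀ ρ) s p ψ := by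
  have hp0 : (0:ℝ) < p := lt_trans one_pos hp
  set I := ∫⁻ x in ball x₀ ρ, ENNReal.ofReal (|ψ x| ^ p) with hI
  -- I is finite
  obtain ⟨C, hC⟩ := (isCompact_closedBall x₀ ρ).exists_bound_of_continuousOn
    hψ.continuous.continuousOn
  have hC0 : 0 ≤ C := le_trans (norm_nonneg (ψ x₀)) (hC x₀ (mem_closedBall_self hρ.le))
  have hIfin : I ≠ ⊤ := by
    have hle : I ≤ ENNReal.ofReal (C ^ p) * volume (ball x₀ ρ) := by
      rw [hI, ← setLIntegral_const]
      refine setLIntegral_mono measurable_const (fun x hx => ?_)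
      exact ENNReal.ofReal_le_ofReal (Real.rpow_le_rpow (abs_nonneg _)
        (hC x (ball_subset_closedBall hx)) hp0.le)
    exact ne_top_of_le_ne_top (ENNReal.mul_ne_top ENNReal.ofReal_ne_top
      (measure_ball_lt_top).ne) hle
  rcases eq_or_ne I 0 with hI0 | hIpos
  · rw [hI0, mul_zero]; exact zero_le
  -- κ : normalization
  have hItR : 0 < I.toReal := ENNReal.toReal_pos hIpos hIfin
  set κ : ℝ := (I.toReal / ρ ^ N) ^ (1/p) with hκdef
  have hκ : 0 < κ := Real.rpow_pos_of_pos (by positivity) _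
  have hκp : κ ^ p = I.toReal / ρ ^ N := by
    rw [hκdef, one_div, Real.rpow_inv_rpow (by positivity) hp0.ne']
  have hIval : I = ENNReal.ofReal (κ ^ p * ρ ^ N) := by
    rw [hκp, div_mul_cancel₀ _ (by positivity : (ρ:ℝ) ^ N ≠ 0),
      ENNReal.ofReal_toReal hIfin]
  set e : Euc N → Euc N := fun x => x₀ + ρ • x with he
  set φt : Euc N → ℝ := fun x => κ⁻¹ * ψ (e x) with hφt
  -- pointwise |φt x|^p
  have habs : ∀ x, |φt x| ^ p = κ⁻¹ ^ p * |ψ (e x)| ^ p := by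
    intro x
    rw [hφt]
    simp only []
    rw [abs_mul, abs_of_pos (inv_pos.mpr hκ), Real.mul_rpow (by positivity) (abs_nonneg _)]
  -- normalization
  have hnorm : (∫⁻ x in ball (0:Euc N) 1, ENNReal.ofReal (|φt x| ^ p)) = 1 := by
    have hcov := lintegral_affMap x₀ hρ (fun u => ENNReal.ofReal (|ψ u| ^ p))
      measurableSet_ball (A := ball x₀ ρ)
    rw [preimage_affMap_ball x₀ hρ] at hcov
    have : (∫⁻ x in ball (0:Euc N) 1, ENNReal.ofReal (|φt x| ^ p))
        = ENNReal.ofReal (κ⁻¹ ^ p) * ∫⁻ x in ball (0:Euc N) 1, ENNReal.ofReal (|ψ (e x)| ^ p) := by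
      rw [← lintegral_const_mul' _ _ ENNReal.ofReal_ne_top]
      refine lintegral_congr (fun x => ?_)
      rw [habs x, ENNReal.ofReal_mul (by positivity)]
    rw [this]
    have h2 : ENNReal.ofReal (ρ ^ N) ≠ 0 := by
      exact (ENNReal.ofReal_pos.mpr (by positivity)).ne'
    have h3 : I = ENNReal.ofReal (ρ ^ N) * ∫⁻ x in ball (0:Euc N) 1,
        ENNReal.ofReal (|ψ (e x)| ^ p) := hcov
    have h4 : (∫⁻ x in ball (0:Euc N) 1, ENNReal.ofReal (|ψ (e x)| ^ p))
        = ENNReal.ofReal (κ ^ p) := by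
      have := h3
      rw [hIval] at this
      have h5 : ENNReal.ofReal (κ ^ p * ρ ^ N) = ENNReal.ofReal (ρ ^ N) * ENNReal.ofReal (κ ^ p) := by
        rw [← ENNReal.ofReal_mul (by positivity), mul_comm]
      rw [h5] at this
      exact (ENNReal.mul_right_inj h2 ENNReal.ofReal_ne_top).mp this.symm
    rw [h4, ← ENNReal.ofReal_mul (by positivity), ← Real.mul_rpow (by positivity) hκ.le,
      inv_mul_cancel₀ hκ.ne', Real.one_rpow, ENNReal.ofReal_one]
  -- gagliardo change of variables
  set M : ℝ := (N : ℝ) + s * p with hM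
  have hM0 : 0 < M := by positivity
  set F : Euc N → Euc N → ℝ≥0∞ :=
    fun u v => ENNReal.ofReal (|ψ u - ψ v| ^ p / ‖u - v‖ ^ M) with hF
  set J : ℝ≥0∞ := ∫⁻ x in ball (0:Euc N) 1, ∫⁻ y in ball (0:Euc N) 1, F (e x) (e y) with hJ
  have hcd : ContDiffOn ℝ 1 φt (closure (ball (0:Euc N) 1)) := by
    refine ContDiff.contDiffOn ?_
    exact contDiff_const.mul (hψ.comp (contDiff_const.add (contDiff_id.const_smul ρ)))
  have hφt0 : φt 0 = 0 := by
    rw [hφt]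
    simp only [he, smul_zero, add_zero, h0, mul_zero]
  have hpt : ∀ x y : Euc N, ENNReal.ofReal (|φt x - φt y| ^ p / ‖x - y‖ ^ M)
      = ENNReal.ofReal (κ⁻¹ ^ p * ρ ^ M) * F (e x) (e y) := by
    intro x y
    have hΔ : φt x - φt y = κ⁻¹ * (ψ (e x) - ψ (e y)) := by rw [hφt]; ring
    have hee : e x - e y = ρ • (x - y) := by
      rw [he]; simp only [smul_sub]; abel
    have hnrm : ‖e x - e y‖ ^ M = ρ ^ M * ‖x - y‖ ^ M := by
      rw [hee, norm_smul, Real.norm_eq_abs, abs_of_pos hρ,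
        Real.mul_rpow hρ.le (norm_nonneg _)]
    rw [hF]
    simp only []
    rw [← ENNReal.ofReal_mul (by positivity)]
    congr 1
    rw [hΔ, abs_mul, abs_of_pos (inv_pos.mpr hκ),
      Real.mul_rpow (by positivity) (abs_nonneg _), hnrm]
    rcases eq_or_ne (‖x - y‖ ^ M) 0 with ht | ht
    · rw [ht]; simp
    · have hρM : ρ ^ M ≠ 0 := by positivity
      field_simp
  have hgeq : ∀ u : Euc N, (∫⁻ v in ball x₀ ρ, F u v)
      = ENNReal.ofReal (ρ ^ N) * ∫⁻ y in ball (0:Euc N) 1, F u (e y) := by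
    intro u
    have := lintegral_affMap x₀ hρ (fun v => F u v) measurableSet_ball (A := ball x₀ ρ)
    rwa [preimage_affMap_ball x₀ hρ] at this
  have hGρeq : gagliardoP (ball x₀ ρ) s p ψ
      = ENNReal.ofReal (ρ ^ N) * ENNReal.ofReal (ρ ^ N) * J := by
    have h1 : gagliardoP (ball x₀ ρ) s p ψ = ∫⁻ u in ball x₀ ρ, ∫⁻ v in ball x₀ ρ, F u v := rfl
    rw [h1]
    have h2 := lintegral_affMap x₀ hρ (fun u => ∫⁻ v in ball x₀ ρ, F u v)
      measurableSet_ball (A := ball x₀ ρ)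
    rw [preimage_affMap_ball x₀ hρ] at h2
    rw [h2]
    have h3 : (∫⁻ x in ball (0:Euc N) 1, ∫⁻ v in ball x₀ ρ, F (e x) v)
        = ENNReal.ofReal (ρ ^ N) * J := by
      rw [hJ, ← lintegral_const_mul' _ _ ENNReal.ofReal_ne_top]
      exact lintegral_congr (fun x => hgeq (e x))
    rw [h3, mul_assoc]
  have hG1 : gagliardoP (ball (0:Euc N) 1) s p φt
      = ENNReal.ofReal (κ⁻¹ ^ p * ρ ^ M) * J := by
    have h1 : gagliardoP (ball (0:Euc N) 1) s p φt
        = ∫⁻ x in ball (0:Euc N) 1, ∫⁻ y in ball (0:Euc N) 1,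
            ENNReal.ofReal (|φt x - φt y| ^ p / ‖x - y‖ ^ M) := rfl
    rw [h1, hJ, ← lintegral_const_mul' _ _ ENNReal.ofReal_ne_top]
    refine lintegral_congr (fun x => ?_)
    rw [← lintegral_const_mul' _ _ ENNReal.ofReal_ne_top]
    exact lintegral_congr (fun y => hpt x y)
  have hmem : LambdaConst N s p 0 1 ≤ gagliardoP (ball (0:Euc N) 1) s p φt :=
    sInf_le ⟨φt, hcd, hnorm, hφt0, rfl⟩
  have hreal : κ⁻¹ ^ p * ρ ^ M * (κ ^ p * ρ ^ N) = ρ ^ (s * p) * (ρ ^ N * ρ ^ N) := by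
    have h1 : κ⁻¹ ^ p = (κ ^ p)⁻¹ := Real.inv_rpow hκ.le p
    have h2 : ρ ^ M = ρ ^ (N : ℝ) * ρ ^ (s * p) := by
      rw [hM, Real.rpow_add hρ]
    have h3 : ρ ^ (N : ℝ) = ρ ^ N := Real.rpow_natCast ρ N
    have h4 : κ ^ p ≠ 0 := by positivity
    rw [h1, h2, h3]
    field_simp
  calc LambdaConst N s p 0 1 * I
      ≤ ENNReal.ofReal (κ⁻¹ ^ p * ρ ^ M) * J * I :=
        mul_le_mul_left (hmem.trans_eq hG1) I
    _ = ENNReal.ofReal (κ⁻¹ ^ p * ρ ^ M) * ENNReal.ofReal (κ ^ p * ρ ^ N) * J := by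
        rw [hIval]; ring
    _ = ENNReal.ofReal (ρ ^ (s * p)) * (ENNReal.ofReal (ρ ^ N) * ENNReal.ofReal (ρ ^ N) * J) := by
        rw [← ENNReal.ofReal_mul (by positivity), hreal, ENNReal.ofReal_mul (by positivity),
          ENNReal.ofReal_mul (by positivity)]
        ring
    _ = ENNReal.ofReal (ρ ^ (s * p)) * gagliardoP (ball x₀ ρ) s p ψ := by rw [hGρeq]


lemma iSup_rpow' {ι : Sort*} (f : ι → ℝ≥0∞) {q : ℝ} (hq : 0 < q) :
    (⨆ i, f i) ^ q = ⨆ i, (f i) ^ q := by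
  rcases isEmpty_or_nonempty ι with h | h
  · rw [iSup_of_empty, iSup_of_empty]
    simp [ENNReal.zero_rpow_of_pos hq]
  · exact Monotone.map_ciSup_of_continuousAt ENNReal.continuous_rpow_const.continuousAt
      (fun a b hab => ENNReal.rpow_le_rpow hab hq.le) (OrderTop.bddAbove _)

/-- gagliardoP only depends on differences, so subtracting a constant doesn't change it. -/
lemma gagliardoP_sub_const (Ω : Set (Euc N)) (s p : ℝ) (u : Euc N → ℝ) (c : ℝ) :
    gagliardoP Ω s p (fun x => u x - c) = gagliardoP Ω s p u := by
  unfold gagliardoP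
  refine lintegral_congr fun x => lintegral_congr fun y => ?_
  congr 2
  ring_nf

lemma gagliardoP_mono_set {Ω Ω' : Set (Euc N)} (h : Ω ⊆ Ω') (s p : ℝ) (u : Euc N → ℝ) :
    gagliardoP Ω s p u ≤ gagliardoP Ω' s p u := by
  unfold gagliardoP
  refine le_trans (lintegral_mono (fun x => lintegral_mono_set h)) ?_
  exact lintegral_mono_set h

lemma core {s p : ℝ} (hN : 1 ≤ N) (hs0 : 0 < s) (hs1 : s < 1) (hp : 1 < p)
    (hsp : (N : ℝ) < s * p) {T : ℝ} (hT : 1 < T) (x₀ y₀ : Euc N) (hne : x₀ ≠ y₀)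
    (φ : Euc N → ℝ) (hφ : ContDiff ℝ (⊤ : ℕ∞) φ) :
    ENNReal.ofReal ((volume (ball (0 : Euc N) 1)).toReal *
        ((T - 1) ^ (N : ℕ) / ((T - 1) ^ s + T ^ s) ^ p)) *
      LambdaConst N s p 0 1 *
      ENNReal.ofReal (|φ x₀ - φ y₀| / ‖x₀ - y₀‖ ^ (s - (N : ℝ) / p)) ^ p ≤
      gagliardoP Set.univ s p φ := by
  have hp0 : (0:ℝ) < p := lt_trans one_pos hp
  set ω : ℝ := (volume (ball (0 : Euc N) 1)).toReal with hω
  have hω0 : 0 ≤ ω := ENNReal.toReal_nonneg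
  set r : ℝ := ‖x₀ - y₀‖ with hr
  have hr0 : 0 < r := by rw [hr]; exact norm_sub_pos_iff.mpr hne
  set δ : ℝ := |φ x₀ - φ y₀| with hδ
  have hδ0 : 0 ≤ δ := abs_nonneg _
  set R : ℝ := T * r with hR
  set R' : ℝ := (T - 1) * r with hR'
  have hT1 : 0 < T - 1 := by linarith
  have hR0 : 0 < R := by positivity
  have hR'0 : 0 < R' := by positivity
  set G : ℝ≥0∞ := gagliardoP Set.univ s p φ with hG
  set Λ : ℝ≥0∞ := LambdaConst N s p 0 1 with hΛ
  set ψ : Euc N → ℝ := fun x => φ x - φ x₀ with hψ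
  set ψ' : Euc N → ℝ := fun x => φ x - φ y₀ with hψ'
  have hψcd : ContDiff ℝ 1 ψ := (hφ.of_le (by simp)).sub contDiff_const
  have hψ'cd : ContDiff ℝ 1 ψ' := (hφ.of_le (by simp)).sub contDiff_const
  set I1 : ℝ≥0∞ := ∫⁻ x in ball x₀ R, ENNReal.ofReal (|ψ x| ^ p) with hI1
  set I2 : ℝ≥0∞ := ∫⁻ x in ball y₀ R', ENNReal.ofReal (|ψ' x| ^ p) with hI2
  have hL1 : Λ * I1 ≤ ENNReal.ofReal (R ^ (s * p)) * G := by
    refine le_trans (L1 hs0 hp x₀ hR0 ψ hψcd (by simp [hψ])) ?_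
    refine mul_le_mul_right ?_ _
    rw [show gagliardoP (ball x₀ R) s p ψ = gagliardoP (ball x₀ R) s p φ from
      gagliardoP_sub_const _ s p φ (φ x₀)]
    exact gagliardoP_mono_set (subset_univ _) s p φ
  have hL2 : Λ * I2 ≤ ENNReal.ofReal (R' ^ (s * p)) * G := by
    refine le_trans (L1 hs0 hp y₀ hR'0 ψ' hψ'cd (by simp [hψ'])) ?_
    refine mul_le_mul_right ?_ _
    rw [show gagliardoP (ball y₀ R') s p ψ' = gagliardoP (ball y₀ R') s p φ from
      gagliardoP_sub_const _ s p φ (φ y₀)]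
    exact gagliardoP_mono_set (subset_univ _) s p φ
  have hsub : ball y₀ R' ⊆ ball x₀ R := by
    intro z hz
    rw [mem_ball, dist_eq_norm] at hz ⊢
    calc ‖z - x₀‖ ≤ ‖z - y₀‖ + ‖y₀ - x₀‖ := norm_sub_le_norm_sub_add_norm_sub z y₀ x₀
      _ < R' + r := by
          rw [show ‖y₀ - x₀‖ = r by rw [hr, norm_sub_rev]]
          exact add_lt_add_left hz r
      _ = R := by rw [hR', hR]; ring
  -- Minkowski step
  set f1 : Euc N → ℝ≥0∞ := fun x => ENNReal.ofReal |ψ x| with hf1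
  set f2 : Euc N → ℝ≥0∞ := fun x => ENNReal.ofReal |ψ' x| with hf2
  have hf1m : AEMeasurable f1 (volume.restrict (ball y₀ R')) :=
    (ENNReal.measurable_ofReal.comp hψcd.continuous.abs.measurable).aemeasurable
  have hf2m : AEMeasurable f2 (volume.restrict (ball y₀ R')) :=
    (ENNReal.measurable_ofReal.comp hψ'cd.continuous.abs.measurable).aemeasurable
  have hmink := ENNReal.lintegral_Lp_add_le hf1m hf2m hp.le
  -- pointwise: ofReal (δ^p) ≤ (f1 + f2) ^ p
  have hpt : ∀ x : Euc N, ENNReal.ofReal (δ ^ p) ≤ ((f1 + f2) x) ^ p := by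
    intro x
    have h1 : δ ≤ |ψ x| + |ψ' x| := by
      rw [hδ, hψ, hψ']
      calc |φ x₀ - φ y₀| = |(φ x - φ y₀) - (φ x - φ x₀)| := by ring_nf
        _ ≤ |φ x - φ y₀| + |φ x - φ x₀| := abs_sub _ _
        _ = |φ x - φ x₀| + |φ x - φ y₀| := by ring
    have h2 : ((f1 + f2) x) ^ p = ENNReal.ofReal ((|ψ x| + |ψ' x|) ^ p) := by
      simp only [Pi.add_apply, hf1, hf2]
      rw [← ENNReal.ofReal_add (abs_nonneg _) (abs_nonneg _),
        ENNReal.ofReal_rpow_of_nonneg (by positivity) hp0.le]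
    rw [h2]
    exact ENNReal.ofReal_le_ofReal (Real.rpow_le_rpow hδ0 h1 hp0.le)
  have hD : ENNReal.ofReal (δ ^ p) * volume (ball y₀ R') ≤
      ∫⁻ x in ball y₀ R', ((f1 + f2) x) ^ p := by
    rw [← setLIntegral_const]
    exact lintegral_mono (fun x => hpt x)
  have hfp1 : (∫⁻ x in ball y₀ R', (f1 x) ^ p) ≤ I1 := by
    refine le_trans (le_of_eq ?_) (lintegral_mono_set hsub)
    refine lintegral_congr fun x => ?_
    show ENNReal.ofReal |ψ x| ^ p = ENNReal.ofReal (|ψ x| ^ p)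
    exact ENNReal.ofReal_rpow_of_nonneg (abs_nonneg _) hp0.le
  have hfp2 : (∫⁻ x in ball y₀ R', (f2 x) ^ p) = I2 := by
    refine lintegral_congr fun x => ?_
    show ENNReal.ofReal |ψ' x| ^ p = ENNReal.ofReal (|ψ' x| ^ p)
    exact ENNReal.ofReal_rpow_of_nonneg (abs_nonneg _) hp0.le
  -- combine at the 1/p level
  have hcomb : (ENNReal.ofReal (δ ^ p) * volume (ball y₀ R') * Λ) ^ (1/p) ≤
      ENNReal.ofReal (R ^ s + R' ^ s) * G ^ (1/p) := by
    have hq0 : (0:ℝ) ≤ 1/p := by positivity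
    calc (ENNReal.ofReal (δ ^ p) * volume (ball y₀ R') * Λ) ^ (1/p)
        = (ENNReal.ofReal (δ ^ p) * volume (ball y₀ R')) ^ (1/p) * Λ ^ (1/p) := by
          rw [ENNReal.mul_rpow_of_nonneg _ _ hq0]
      _ ≤ ((∫⁻ x in ball y₀ R', ((f1 + f2) x) ^ p) ^ (1/p)) * Λ ^ (1/p) :=
          mul_le_mul_left (ENNReal.rpow_le_rpow hD hq0) _
      _ ≤ ((I1 ^ (1/p)) + (I2 ^ (1/p))) * Λ ^ (1/p) := by
          refine mul_le_mul_left ?_ _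
          refine le_trans hmink ?_
          exact add_le_add (ENNReal.rpow_le_rpow hfp1 hq0) (le_of_eq (by rw [hfp2]))
      _ = (Λ * I1) ^ (1/p) + (Λ * I2) ^ (1/p) := by
          rw [add_mul, ENNReal.mul_rpow_of_nonneg _ _ hq0, ENNReal.mul_rpow_of_nonneg _ _ hq0]
          ring
      _ ≤ (ENNReal.ofReal (R ^ (s*p)) * G) ^ (1/p) + (ENNReal.ofReal (R' ^ (s*p)) * G) ^ (1/p) :=
          add_le_add (ENNReal.rpow_le_rpow hL1 hq0) (ENNReal.rpow_le_rpow hL2 hq0)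
      _ = ENNReal.ofReal (R ^ s + R' ^ s) * G ^ (1/p) := by
          rw [ENNReal.mul_rpow_of_nonneg _ _ hq0, ENNReal.mul_rpow_of_nonneg _ _ hq0,
            ENNReal.ofReal_rpow_of_nonneg (Real.rpow_nonneg hR0.le _) hq0,
            ENNReal.ofReal_rpow_of_nonneg (Real.rpow_nonneg hR'0.le _) hq0,
            ← Real.rpow_mul hR0.le, ← Real.rpow_mul hR'0.le,
            show s * p * (1/p) = s by field_simp,
            ENNReal.ofReal_add (Real.rpow_nonneg hR0.le _) (Real.rpow_nonneg hR'0.le _)]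
          ring
  -- raise to power p
  have hkey : ENNReal.ofReal (δ ^ p) * volume (ball y₀ R') * Λ ≤
      ENNReal.ofReal ((R ^ s + R' ^ s) ^ p) * G := by
    have h9 := ENNReal.rpow_le_rpow hcomb hp0.le
    rw [← ENNReal.rpow_mul, show 1/p*p = (1:ℝ) by field_simp, ENNReal.rpow_one] at h9
    refine le_trans h9 (le_of_eq ?_)
    rw [ENNReal.mul_rpow_of_nonneg _ _ hp0.le, ← ENNReal.rpow_mul,
      show 1/p*p = (1:ℝ) by field_simp, ENNReal.rpow_one,
      ENNReal.ofReal_rpow_of_nonneg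
        (add_nonneg (Real.rpow_nonneg hR0.le _) (Real.rpow_nonneg hR'0.le _)) hp0.le]
  -- volume of the ball
  have hvol : volume (ball y₀ R') = ENNReal.ofReal (R' ^ (N:ℕ) * ω) := by
    rw [Measure.addHaar_ball_of_pos volume y₀ hR'0, finrank_euclideanSpace_fin,
      ENNReal.ofReal_mul (pow_nonneg hR'0.le _), hω,
      ENNReal.ofReal_toReal measure_ball_lt_top.ne]
  -- final algebra
  set A0 : ℝ := ω * ((T - 1) ^ (N : ℕ) / ((T - 1) ^ s + T ^ s) ^ p) * (δ / r ^ (s - (N:ℝ)/p)) ^ p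
    with hA0
  set B0 : ℝ := (R ^ s + R' ^ s) ^ p with hB0
  have hB0pos : 0 < B0 :=
    Real.rpow_pos_of_pos (add_pos (Real.rpow_pos_of_pos hR0 s) (Real.rpow_pos_of_pos hR'0 s)) p
  have hT0 : (0:ℝ) < T := lt_trans one_pos hT
  have hDpos : (0:ℝ) < ((T - 1) ^ s + T ^ s) ^ p :=
    Real.rpow_pos_of_pos (add_pos (Real.rpow_pos_of_pos hT1 s) (Real.rpow_pos_of_pos hT0 s)) p
  have hfT0 : (0:ℝ) ≤ (T - 1) ^ (N:ℕ) / ((T - 1) ^ s + T ^ s) ^ p :=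
    div_nonneg (pow_nonneg hT1.le _) hDpos.le
  have hqd0 : (0:ℝ) ≤ δ / r ^ (s - (N:ℝ)/p) := div_nonneg hδ0 (Real.rpow_nonneg hr0.le _)
  have hAB : A0 * B0 = δ ^ p * (R' ^ (N:ℕ) * ω) := by
    have e1 : (δ / r ^ (s - (N:ℝ)/p)) ^ p = δ ^ p / r ^ ((s - (N:ℝ)/p) * p) := by
      rw [Real.div_rpow hδ0 (Real.rpow_nonneg hr0.le _), ← Real.rpow_mul hr0.le]
    have e3 : (s - (N:ℝ)/p) * p = s * p - (N:ℝ) := by field_simp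
    have e2 : B0 = r ^ (s * p) * ((T - 1) ^ s + T ^ s) ^ p := by
      rw [hB0, hR, hR', Real.mul_rpow hT0.le hr0.le, Real.mul_rpow hT1.le hr0.le,
        show T^s*r^s + (T-1)^s*r^s = r^s * ((T-1)^s + T^s) by ring,
        Real.mul_rpow (Real.rpow_nonneg hr0.le s)
          (add_nonneg (Real.rpow_nonneg hT1.le s) (Real.rpow_nonneg hT0.le s)),
        ← Real.rpow_mul hr0.le]
    have e4 : r ^ (s*p) = r ^ (N:ℕ) * r ^ (s*p - (N:ℝ)) := by
      rw [← Real.rpow_natCast r N, ← Real.rpow_add hr0]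
      congr 1
      ring
    have e5 : R' ^ (N:ℕ) = (T-1) ^ (N:ℕ) * r ^ (N:ℕ) := by rw [hR', mul_pow]
    have hrne : r ^ (s*p - (N:ℝ)) ≠ 0 := (Real.rpow_pos_of_pos hr0 _).ne'
    rw [hA0, e1, e3, e2, e4, e5]
    field_simp
  have htgt : ENNReal.ofReal (ω * ((T - 1) ^ (N : ℕ) / ((T - 1) ^ s + T ^ s) ^ p)) * Λ *
      ENNReal.ofReal (δ / r ^ (s - (N : ℝ) / p)) ^ p = Λ * ENNReal.ofReal A0 := by
    rw [ENNReal.ofReal_rpow_of_nonneg hqd0 hp0.le, hA0,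
      ENNReal.ofReal_mul (mul_nonneg hω0 hfT0)]
    ring
  rw [htgt]
  have step : Λ * ENNReal.ofReal A0 * ENNReal.ofReal B0 ≤ G * ENNReal.ofReal B0 := by
    calc Λ * ENNReal.ofReal A0 * ENNReal.ofReal B0
        = Λ * ENNReal.ofReal (A0 * B0) := by
          rw [mul_assoc, ← ENNReal.ofReal_mul (mul_nonneg (mul_nonneg hω0 hfT0)
            (Real.rpow_nonneg hqd0 p))]
      _ = ENNReal.ofReal (δ ^ p) * volume (ball y₀ R') * Λ := by
          rw [hAB, hvol, ENNReal.ofReal_mul (Real.rpow_nonneg hδ0 p)]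
          ring
      _ ≤ ENNReal.ofReal B0 * G := hkey
      _ = G * ENNReal.ofReal B0 := mul_comm _ _
  exact (ENNReal.mul_le_mul_iff_left (ENNReal.ofReal_pos.mpr hB0pos).ne'
    ENNReal.ofReal_ne_top).mp step

/-- The fractional Morrey inequality with explicit constant
`θ_{N,s,p} Λ_{s,p}(B_1(0))`, and the resulting lower bound on `𝔪_{s,p}(ℝ^N)`. -/
theorem stmt_12 (N : ℕ) (hN : 1 ≤ N) (s p : ℝ) (hs0 : 0 < s) (hs1 : s < 1)
    (hp : 1 < p) (hsp : (N : ℝ) < s * p) :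
    (∀ φ : Euc N → ℝ, ContDiff ℝ (⊤ : ℕ∞) φ → HasCompactSupport φ →
      ENNReal.ofReal ((volume (ball (0 : Euc N) 1)).toReal *
          sSup ((fun T : ℝ => (T - 1) ^ (N : ℕ) / ((T - 1) ^ s + T ^ s) ^ p) '' Set.Ioi 1)) *
        LambdaConst N s p 0 1 * holderSemi Set.univ (s - N / p) φ ^ p ≤
        gagliardoP Set.univ s p φ) ∧
    ENNReal.ofReal ((volume (ball (0 : Euc N) 1)).toReal *
        sSup ((fun T : ℝ => (T - 1) ^ (N : ℕ) / ((T - 1) ^ s + T ^ s) ^ p) '' Set.Ioi 1)) *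
      LambdaConst N s p 0 1 ≤ morreyConst N s p := by
  have hp0 : (0:ℝ) < p := lt_trans one_pos hp
  set ω : ℝ := (volume (ball (0 : Euc N) 1)).toReal with hω
  have hω0 : 0 ≤ ω := ENNReal.toReal_nonneg
  set fT : ℝ → ℝ := fun T : ℝ => (T - 1) ^ (N : ℕ) / ((T - 1) ^ s + T ^ s) ^ p with hfT
  set S : Set ℝ := fT '' Set.Ioi 1 with hS
  have hSne : S.Nonempty := ⟨fT 2, ⟨2, by norm_num, rfl⟩⟩
  have hSbd : BddAbove S := by
    refine ⟨1, ?_⟩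
    rintro x ⟨T, hT, rfl⟩
    simp only [mem_Ioi] at hT
    have hT1 : (0:ℝ) < T - 1 := by linarith
    have hT0 : (0:ℝ) < T := by linarith
    have hD : (0:ℝ) < ((T - 1) ^ s + T ^ s) ^ p :=
      Real.rpow_pos_of_pos (add_pos (Real.rpow_pos_of_pos hT1 s) (Real.rpow_pos_of_pos hT0 s)) p
    rw [hfT]
    simp only []
    rw [div_le_one hD]
    rcases le_or_gt T 2 with h2 | h2
    · have hnum : (T - 1) ^ (N:ℕ) ≤ 1 := pow_le_one₀ hT1.le (by linarith)
      have h3 : (1:ℝ) ≤ T ^ s := by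
        calc (1:ℝ) = 1 ^ s := (Real.one_rpow s).symm
          _ ≤ T ^ s := Real.rpow_le_rpow one_pos.le hT.le hs0.le
      have h4 : (1:ℝ) ≤ (T - 1) ^ s + T ^ s :=
        le_add_of_nonneg_of_le (Real.rpow_nonneg hT1.le s) h3
      have h5 : (1:ℝ) ≤ ((T - 1) ^ s + T ^ s) ^ p := by
        calc (1:ℝ) = 1 ^ p := (Real.one_rpow p).symm
          _ ≤ ((T - 1) ^ s + T ^ s) ^ p := Real.rpow_le_rpow one_pos.le h4 hp0.le
      linarith
    · have h1T : (1:ℝ) ≤ T - 1 := by linarith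
      have hnum : (T - 1) ^ (N:ℕ) ≤ (T - 1) ^ (s * p) := by
        rw [← Real.rpow_natCast (T-1) N]
        exact Real.rpow_le_rpow_of_exponent_le h1T hsp.le
      have hden : (T - 1) ^ (s * p) ≤ ((T - 1) ^ s + T ^ s) ^ p := by
        rw [Real.rpow_mul hT1.le]
        exact Real.rpow_le_rpow (Real.rpow_nonneg hT1.le s)
          (le_add_of_le_of_nonneg le_rfl (Real.rpow_nonneg hT0.le s)) hp0.le
      linarith
  have hmap : ENNReal.ofReal (ω * sSup S) = ⨆ T ∈ Set.Ioi (1:ℝ), ENNReal.ofReal (ω * fT T) := by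
    have hmono : Monotone (fun t : ℝ => ENNReal.ofReal (ω * t)) := fun a b hab =>
      ENNReal.ofReal_le_ofReal (mul_le_mul_of_nonneg_left hab hω0)
    have hcont : ContinuousAt (fun t : ℝ => ENNReal.ofReal (ω * t)) (sSup S) :=
      (ENNReal.continuous_ofReal.comp (continuous_const.mul continuous_id)).continuousAt
    have h := Monotone.map_csSup_of_continuousAt hcont hmono hSne hSbd
    rw [hS, Set.image_image, sSup_image] at h
    exact h
  have main : ∀ φ : Euc N → ℝ, ContDiff ℝ (⊤ : ℕ∞) φ → HasCompactSupport φ →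
      ENNReal.ofReal (ω * sSup S) * LambdaConst N s p 0 1 *
        holderSemi Set.univ (s - N / p) φ ^ p ≤ gagliardoP Set.univ s p φ := by
    intro φ hφ _
    rw [hmap]
    rw [ENNReal.iSup_mul, ENNReal.iSup_mul]
    refine iSup_le fun T => ?_
    rw [ENNReal.iSup_mul, ENNReal.iSup_mul]
    refine iSup_le fun hT => ?_
    rw [holderSemi, iSup_rpow' _ hp0]
    rw [ENNReal.mul_iSup]
    refine iSup_le fun x => ?_
    rw [iSup_rpow' _ hp0, ENNReal.mul_iSup]
    refine iSup_le fun y => ?_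
    rw [iSup_rpow' _ hp0, ENNReal.mul_iSup]
    refine iSup_le fun hne => ?_
    exact core hN hs0 hs1 hp hsp hT x.1 y.1 hne φ hφ
  refine ⟨main, le_sInf ?_⟩
  rintro m ⟨φ, h1, h2, h3, rfl⟩
  have h4 := main φ h1 h2
  rwa [h3, ENNReal.one_rpow, mul_one] at h4
end
end

section
/- Let N ≥ 1, 1 ≤ N < p < ∞, 0 < s < 1 with sp > N. Define ζ(x) = (1 - |x|^{(sp-N)/(p-1)})_+ on ℝ^N. Then the Hölder seminorm of ζ with exponent α = s - N/p equals 1, i.e. sup_{x≠y} |ζ(x)-ζ(y)|/|x-y|^{s-N/p} = 1. -/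
open MeasureTheory ENNReal Filter Metric Set

noncomputable section

/-! With `β = (sp - N)/(p - 1) ∈ (0, 1)`, subadditivity of `t ↦ t^β` gives
`|ζ x - ζ y| ≤ |‖x‖^β - ‖y‖^β| ≤ ‖x - y‖^β`, while `|ζ x - ζ y| ≤ 1` as `ζ` takes values in
`[0, 1]`. Since `0 < α = s - N/p ≤ β`, `min (‖x - y‖^β) 1 ≤ ‖x - y‖^α`, so the seminorm is at
most `1`; the pair `0`, `e` with `‖e‖ = 1` attains `1`. -/

lemma supercritical_exponent_bounds {n s p : ℝ} (hn : 1 ≤ n) (hs0 : 0 < s) (hs1 : s < 1)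
    (hsp : n < s * p) :
    0 < s - n / p ∧ s - n / p ≤ (s * p - n) / (p - 1) ∧ (s * p - n) / (p - 1) < 1 := by
  have hp0 : 0 < p := pos_of_mul_pos_right (by linarith) hs0.le
  have hp1 : 1 < p := by nlinarith
  have hα : s - n / p = (s * p - n) / p := by field_simp
  refine ⟨?_, ?_, ?_⟩
  · rw [hα]; exact div_pos (by linarith) hp0
  · rw [hα]; exact div_le_div_of_nonneg_left (by linarith) (by linarith) (by linarith)
  · rw [div_lt_one (by linarith)]; nlinarith

lemma abs_rpow_sub_rpow_le {a b β : ℝ} (ha : 0 ≤ a) (hb : 0 ≤ b) (hβ0 : 0 ≤ β) (hβ1 : β ≤ 1) :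
    |a ^ β - b ^ β| ≤ |a - b| ^ β := by
  wlog hab : b ≤ a generalizing a b
  · rw [abs_sub_comm, abs_sub_comm a b]
    exact this hb ha (le_of_not_ge hab)
  have hsub : a ^ β ≤ (a - b) ^ β + b ^ β := by
    simpa using Real.rpow_add_le_add_rpow (sub_nonneg.2 hab) hb hβ0 hβ1
  rw [abs_of_nonneg (sub_nonneg.2 (Real.rpow_le_rpow hb hab hβ0)),
    abs_of_nonneg (sub_nonneg.2 hab)]
  linarith

section PowerBump

variable {E : Type*} [SeminormedAddCommGroup E] {α β : ℝ}

def powerBump (β : ℝ) (x : E) : ℝ := max (1 - ‖x‖ ^ β) 0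

lemma powerBump_nonneg (x : E) : 0 ≤ powerBump β x := le_max_right _ _

lemma powerBump_le_one (x : E) : powerBump β x ≤ 1 :=
  max_le (by linarith [Real.rpow_nonneg (norm_nonneg x) β]) zero_le_one

lemma abs_powerBump_sub_le_one (x y : E) : |powerBump β x - powerBump β y| ≤ 1 := by
  simpa using abs_sub_le_of_le_of_le (powerBump_nonneg (β := β) x) (powerBump_le_one x)
    (powerBump_nonneg y) (powerBump_le_one y)

lemma powerBump_zero (hβ : 0 < β) : powerBump β (0 : E) = 1 := by
  simp [powerBump, Real.zero_rpow hβ.ne']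

lemma powerBump_of_norm_eq_one {x : E} (hx : ‖x‖ = 1) : powerBump β x = 0 := by
  simp [powerBump, hx]

lemma abs_powerBump_sub_le_norm_rpow (hβ0 : 0 ≤ β) (hβ1 : β ≤ 1) (x y : E) :
    |powerBump β x - powerBump β y| ≤ ‖x - y‖ ^ β :=
  calc |powerBump β x - powerBump β y| ≤ |(1 - ‖x‖ ^ β) - (1 - ‖y‖ ^ β)| :=
        abs_max_sub_max_le_abs _ _ _
    _ = |‖y‖ ^ β - ‖x‖ ^ β| := by ring_nf
    _ ≤ |‖y‖ - ‖x‖| ^ β := abs_rpow_sub_rpow_le (norm_nonneg y) (norm_nonneg x) hβ0 hβ1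
    _ ≤ ‖x - y‖ ^ β := by
        gcongr
        rw [abs_sub_comm]
        exact abs_norm_sub_norm_le x y

lemma abs_powerBump_sub_le (hα : 0 ≤ α) (hαβ : α ≤ β) (hβ : β ≤ 1) (x y : E) :
    |powerBump β x - powerBump β y| ≤ ‖x - y‖ ^ α := by
  rcases le_or_gt ‖x - y‖ 1 with hle | hgt
  · calc |powerBump β x - powerBump β y| ≤ ‖x - y‖ ^ β :=
          abs_powerBump_sub_le_norm_rpow (hα.trans hαβ) hβ x y
      _ ≤ ‖x - y‖ ^ α := Real.rpow_le_rpow_of_exponent_ge' (norm_nonneg _) hle hα hαβ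
  · calc |powerBump β x - powerBump β y| ≤ 1 := abs_powerBump_sub_le_one x y
      _ ≤ ‖x - y‖ ^ α := Real.one_le_rpow hgt.le hα

end PowerBump

section HolderSemi

variable {N : ℕ} {Ω : Set (Euc N)} {α : ℝ} {u : Euc N → ℝ}

lemma holderSemi_le_one (h : ∀ x ∈ Ω, ∀ y ∈ Ω, |u x - u y| ≤ ‖x - y‖ ^ α) :
    holderSemi Ω α u ≤ 1 := by
  refine iSup_le fun x => iSup_le fun y => iSup_le fun hxy => ENNReal.ofReal_le_one.2 ?_
  have hd : 0 < ‖x.1 - y.1‖ := norm_pos_iff.2 (sub_ne_zero.2 hxy)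
  rw [div_le_one (Real.rpow_pos_of_pos hd α)]
  exact h x.1 x.2 y.1 y.2

lemma ofReal_le_holderSemi {x y : Euc N} (hx : x ∈ Ω) (hy : y ∈ Ω) (hxy : x ≠ y) :
    ENNReal.ofReal (|u x - u y| / ‖x - y‖ ^ α) ≤ holderSemi Ω α u :=
  le_iSup_of_le ⟨x, hx⟩ (le_iSup_of_le ⟨y, hy⟩ (le_iSup_of_le hxy le_rfl))

end HolderSemi

theorem stmt_13_general (N : ℕ) (hN : 1 ≤ N) (s p : ℝ) (hs0 : 0 < s) (hs1 : s < 1)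
    (hsp : (N : ℝ) < s * p) :
    holderSemi Set.univ (s - N / p)
      (fun x : Euc N => max (1 - ‖x‖ ^ ((s * p - N) / (p - 1))) 0) = 1 := by
  obtain ⟨hα, hαβ, hβ⟩ := supercritical_exponent_bounds (by exact_mod_cast hN) hs0 hs1 hsp
  refine le_antisymm
    (holderSemi_le_one fun x _ y _ => abs_powerBump_sub_le hα.le hαβ hβ.le x y) ?_
  let e : Euc N := EuclideanSpace.single ⟨0, hN⟩ 1
  have he : ‖e‖ = 1 := by simp [e]
  have h0e : (0 : Euc N) ≠ e := fun h => by simp [← h] at he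
  calc (1 : ℝ≥0∞)
      = ENNReal.ofReal (|powerBump _ (0 : Euc N) - powerBump _ e| / ‖0 - e‖ ^ (s - N / p)) := by
        rw [powerBump_zero (hα.trans_le hαβ), powerBump_of_norm_eq_one he, zero_sub, norm_neg, he]
        simp
    _ ≤ _ := ofReal_le_holderSemi (mem_univ _) (mem_univ _) h0e

/-- The Hölder seminorm of exponent `s - N/p` of the test function
`ζ(x) = (1 - |x|^{(sp-N)/(p-1)})₊` equals `1`. -/
theorem stmt_13 (N : ℕ) (hN : 1 ≤ N) (s p : ℝ) (hs0 : 0 < s) (hs1 : s < 1)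
    (hNp : (N : ℝ) < p) (hsp : (N : ℝ) < s * p) :
    holderSemi Set.univ (s - N / p)
      (fun x : Euc N => max (1 - ‖x‖ ^ ((s * p - N) / (p - 1))) 0) = 1 :=
  stmt_13_general N hN s p hs0 hs1 hsp
end
end

section
/- Let N ≥ 1, 1 < p < ∞, 0 < s < 1 with sp > N, and let μ be a compactly supported finite signed measure with support K. Let U be a function with finite Gagliardo seminorm and finite Hölder seminorm of exponent s−N/p, weakly solving (−Δ_p)^s U = μ on ℝ^N, i.e. ∬ J_p(U(x)−U(y))(φ(x)−φ(y))/|x−y|^{N+sp} dx dy = ∫ φ dμ for all such test functions φ, where J_p(t)=|t|^{p−2}t. Then U is bounded and for every z ∈ ℝ^N, sup_{ℝ^N} |U − U(z)| = max_K |U − U(z)|. -/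
open MeasureTheory ENNReal Filter Metric Set

noncomputable section

namespace Aux18

lemma holder_bound {N : ℕ} {α : ℝ} {u : Euc N → ℝ} (h : holderSemi Set.univ α u ≠ ⊤) :
    ∀ x y : Euc N, x ≠ y → |u x - u y| ≤ (holderSemi Set.univ α u).toReal * ‖x - y‖ ^ α := by
  intro x y hxy
  have hle : ENNReal.ofReal (|u x - u y| / ‖x - y‖ ^ α) ≤ holderSemi Set.univ α u := by
    refine le_trans ?_ (le_iSup _ (⟨x, mem_univ x⟩ : (Set.univ : Set (Euc N))))
    refine le_trans ?_ (le_iSup _ (⟨y, mem_univ y⟩ : (Set.univ : Set (Euc N))))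
    exact le_iSup (fun _ : x ≠ y => ENNReal.ofReal (|u x - u y| / ‖x - y‖ ^ α)) hxy
  have h2 : |u x - u y| / ‖x - y‖ ^ α ≤ (holderSemi Set.univ α u).toReal := by
    have := ENNReal.toReal_mono h hle
    rwa [ENNReal.toReal_ofReal (by positivity)] at this
  have hpos : (0:ℝ) < ‖x - y‖ ^ α :=
    Real.rpow_pos_of_pos (norm_pos_iff.2 (sub_ne_zero.2 hxy)) _
  calc |u x - u y| = |u x - u y| / ‖x - y‖ ^ α * ‖x - y‖ ^ α := by field_simp
  _ ≤ _ := mul_le_mul_of_nonneg_right h2 hpos.le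

lemma holder_cont {N : ℕ} {α : ℝ} (hα : 0 < α) {u : Euc N → ℝ}
    (h : holderSemi Set.univ α u ≠ ⊤) : Continuous u := by
  set C := (holderSemi Set.univ α u).toReal with hCdef
  have hb : ∀ x y : Euc N, |u x - u y| ≤ C * ‖x - y‖ ^ α := by
    intro x y
    rcases eq_or_ne x y with rfl | hxy
    · simp [Real.zero_rpow hα.ne']
    · exact holder_bound h x y hxy
  rw [continuous_iff_continuousAt]
  intro x0
  rw [Metric.continuousAt_iff]
  intro ε hε
  have hC : (0:ℝ) ≤ C := ENNReal.toReal_nonneg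
  refine ⟨(ε / (C + 1)) ^ (1/α), Real.rpow_pos_of_pos (by positivity) _, ?_⟩
  intro x hx
  have h1 : dist (u x) (u x0) ≤ C * ‖x - x0‖ ^ α := by
    rw [Real.dist_eq]; exact hb x x0
  have h2 : ‖x - x0‖ ^ α ≤ ε / (C + 1) := by
    have hth : ‖x - x0‖ ^ α ≤ ((ε / (C + 1)) ^ (1/α)) ^ α :=
      Real.rpow_le_rpow (norm_nonneg _) (by rw [← dist_eq_norm] at *; exact hx.le) hα.le
    have he : ((ε / (C + 1)) ^ (1/α)) ^ α = ε/(C+1) := by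
      rw [← Real.rpow_mul (by positivity), one_div_mul_cancel hα.ne', Real.rpow_one]
    rwa [he] at hth
  calc dist (u x) (u x0) ≤ C * (ε / (C + 1)) :=
        h1.trans (mul_le_mul_of_nonneg_left h2 hC)
  _ < ε := by
        rw [mul_div_assoc', div_lt_iff₀ (by positivity)]
        nlinarith

lemma div_le_div_same' {a b c : ℝ} (h : a ≤ b) (hc : 0 ≤ c) : a / c ≤ b / c := by
  rcases eq_or_lt_of_le hc with rfl | hc
  · simp
  · exact (div_le_div_iff_of_pos_right hc).2 h

/-- The integrand of the weak formulation. -/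
def Fker (N : ℕ) (s p : ℝ) (U w : Euc N → ℝ) (x y : Euc N) : ℝ :=
  (|U x - U y| ^ (p - 2) * (U x - U y)) * (w x - w y) / ‖x - y‖ ^ ((N : ℝ) + s * p)

lemma Fker_nonneg {N : ℕ} {s p : ℝ} {U w : Euc N → ℝ} (x y : Euc N)
    (hmono : 0 ≤ (U x - U y) * (w x - w y)) : 0 ≤ Fker N s p U w x y := by
  unfold Fker
  apply div_nonneg _ (Real.rpow_nonneg (norm_nonneg _) _)
  have h := Real.rpow_nonneg (abs_nonneg (U x - U y)) (p - 2)
  calc (0:ℝ) = |U x - U y| ^ (p-2) * 0 := by ring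
  _ ≤ |U x - U y| ^ (p-2) * ((U x - U y) * (w x - w y)) := mul_le_mul_of_nonneg_left hmono h
  _ = _ := by ring

lemma Fker_le {N : ℕ} {s p : ℝ} (hp : 1 < p) {U w : Euc N → ℝ} (x y : Euc N)
    (hlip : |w x - w y| ≤ |U x - U y|) :
    Fker N s p U w x y ≤ |U x - U y| ^ p / ‖x - y‖ ^ ((N : ℝ) + s * p) := by
  unfold Fker
  rcases eq_or_ne (U x) (U y) with h | h
  · rw [h]
    simp only [sub_self, mul_zero, zero_mul, abs_zero]
    rw [Real.zero_rpow (by linarith : p ≠ 0), zero_div]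
  · have hxy : x ≠ y := fun hxy => h (by rw [hxy])
    have hD : (0:ℝ) < ‖x - y‖ ^ ((N : ℝ) + s * p) :=
      Real.rpow_pos_of_pos (norm_pos_iff.2 (sub_ne_zero.2 hxy)) _
    rw [div_le_div_iff_of_pos_right hD]
    have hd : |U x - U y| ≠ 0 := fun hc => h (by have := abs_eq_zero.1 hc; linarith)
    calc (|U x - U y| ^ (p - 2) * (U x - U y)) * (w x - w y)
        ≤ |(|U x - U y| ^ (p - 2) * (U x - U y)) * (w x - w y)| := le_abs_self _
    _ = |U x - U y| ^ (p - 2) * |U x - U y| * |w x - w y| := by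
        rw [abs_mul, abs_mul, abs_of_nonneg (Real.rpow_nonneg (abs_nonneg _) _)]
    _ ≤ |U x - U y| ^ (p - 2) * |U x - U y| * |U x - U y| := by
        apply mul_le_mul_of_nonneg_left hlip
        positivity
    _ = |U x - U y| ^ p := by
        rw [← Real.rpow_add_one hd, ← Real.rpow_add_one hd]; ring_nf

lemma Fker_meas {N : ℕ} {s p : ℝ} {U w : Euc N → ℝ} (hU : Continuous U) (hw : Continuous w) :
    Measurable (Function.uncurry (Fker N s p U w)) := by
  rw [show Function.uncurry (Fker N s p U w) = fun q : Euc N × Euc N => Fker N s p U w q.1 q.2 from rfl]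
  have hUm : Measurable U := hU.measurable
  have hwm : Measurable w := hw.measurable
  have h1 : Measurable fun q : Euc N × Euc N => U q.1 - U q.2 :=
    (hUm.comp measurable_fst).sub (hUm.comp measurable_snd)
  have h2 : Measurable fun q : Euc N × Euc N => |U q.1 - U q.2| ^ (p - 2) :=
    h1.abs.pow measurable_const
  have h3 : Measurable fun q : Euc N × Euc N => ‖q.1 - q.2‖ ^ ((N : ℝ) + s * p) :=
    ((measurable_fst.sub measurable_snd).norm).pow measurable_const
  exact ((h2.mul h1).mul
    ((hwm.comp measurable_fst).sub (hwm.comp measurable_snd))).div h3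

lemma gag_mono {N : ℕ} {s p : ℝ} (hp : 0 < p) {u v : Euc N → ℝ}
    (h : ∀ x y, |v x - v y| ≤ |u x - u y|) :
    gagliardoP Set.univ s p v ≤ gagliardoP Set.univ s p u := by
  unfold gagliardoP
  refine lintegral_mono fun x => lintegral_mono fun y => ENNReal.ofReal_le_ofReal ?_
  exact div_le_div_same' (Real.rpow_le_rpow (abs_nonneg _) (h x y) hp.le)
    (Real.rpow_nonneg (norm_nonneg _) _)

lemma holder_mono {N : ℕ} {α : ℝ} {u v : Euc N → ℝ}
    (h : ∀ x y, |v x - v y| ≤ |u x - u y|) :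
    holderSemi Set.univ α v ≤ holderSemi Set.univ α u := by
  unfold holderSemi
  exact iSup_mono fun x => iSup_mono fun y => iSup_mono fun _ =>
    ENNReal.ofReal_le_ofReal (div_le_div_same' (h _ _) (Real.rpow_nonneg (norm_nonneg _) _))


lemma oneSide {N : ℕ} {s p : ℝ} (hs0 : 0 < s) (hp : 1 < p) (hsp : (N : ℝ) < s * p)
    {K : Set (Euc N)} {μp μm : Measure (Euc N)}
    (hμp : μp Kᶜ = 0) (hμm : μm Kᶜ = 0)
    {U : Euc N → ℝ}
    (hUg : gagliardoP Set.univ s p U ≠ ⊤)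
    (hUh : holderSemi Set.univ (s - N / p) U ≠ ⊤)
    (hweak : ∀ φ : Euc N → ℝ, gagliardoP Set.univ s p φ ≠ ⊤ →
      holderSemi Set.univ (s - N / p) φ ≠ ⊤ →
      (∫ x, ∫ y, (|U x - U y| ^ (p - 2) * (U x - U y)) * (φ x - φ y) /
          ‖x - y‖ ^ ((N : ℝ) + s * p)) = (∫ x, φ x ∂μp) - ∫ x, φ x ∂μm)
    (z : Euc N) (t : ℝ) (ht : 0 < t) (hKt : ∀ k ∈ K, U k - U z ≤ t) :
    ∀ x, U x - U z ≤ t := by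
  have hp0 : (0:ℝ) < p := lt_trans one_pos hp
  have hα : 0 < s - N / p := by
    rw [sub_pos, div_lt_iff₀ hp0]; exact hsp
  have hUcont : Continuous U := holder_cont hα hUh
  by_contra hcon
  push_neg at hcon
  obtain ⟨x0, hx0⟩ := hcon
  set c : ℝ := U z + t with hc
  set w : Euc N → ℝ := fun x => max (U x - c) 0 with hw
  have hwcont : Continuous w := (hUcont.sub continuous_const).max continuous_const
  have hlip : ∀ x y : Euc N, |w x - w y| ≤ |U x - U y| := by
    intro x y
    have := abs_max_sub_max_le_abs (U x - c) (U y - c) 0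
    simpa using this
  have hmono : ∀ x y : Euc N, 0 ≤ (U x - U y) * (w x - w y) := by
    intro x y
    rcases le_total (U x) (U y) with h | h
    · have h2 : w x ≤ w y := max_le_max (by linarith) le_rfl
      nlinarith [h2, h]
    · have h2 : w y ≤ w x := max_le_max (by linarith) le_rfl
      exact mul_nonneg (by linarith) (by linarith)
  have hwG : gagliardoP Set.univ s p w ≠ ⊤ :=
    fun hcontra => hUg (top_le_iff.1 (hcontra ▸ gag_mono hp0 hlip))
  have hwH : holderSemi Set.univ (s - N / p) w ≠ ⊤ :=
    fun hcontra => hUh (top_le_iff.1 (hcontra ▸ holder_mono hlip))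
  -- the right-hand side vanishes
  have hwK : ∀ k ∈ K, w k = 0 := by
    intro k hk
    exact max_eq_right (by have := hKt k hk; simp only [hc]; linarith)
  have hzero : ∀ (ν : Measure (Euc N)), ν Kᶜ = 0 → ∫ x, w x ∂ν = 0 := by
    intro ν hν
    refine integral_eq_zero_of_ae ?_
    rw [Filter.EventuallyEq, ae_iff]
    refine measure_mono_null ?_ hν
    intro k hk
    simp only [mem_setOf_eq, Pi.zero_apply] at hk
    exact fun hkK => hk (hwK k hkK)
  have happ : (∫ x, ∫ y, Fker N s p U w x y) = 0 := by
    have := hweak w hwG hwH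
    rw [hzero μp hμp, hzero μm hμm, sub_zero] at this
    exact this
  -- finiteness of the lintegral
  have hF0 : ∀ x y, 0 ≤ Fker N s p U w x y := fun x y => Fker_nonneg x y (hmono x y)
  have hFle : ∀ x y, Fker N s p U w x y ≤ |U x - U y| ^ p / ‖x - y‖ ^ ((N : ℝ) + s * p) :=
    fun x y => Fker_le hp x y (hlip x y)
  have hFm : Measurable (Function.uncurry (Fker N s p U w)) := Fker_meas hUcont hwcont
  have hIle : (∫⁻ x, ∫⁻ y, ENNReal.ofReal (Fker N s p U w x y)) ≤ gagliardoP Set.univ s p U := by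
    unfold gagliardoP
    simp only [Measure.restrict_univ]
    exact lintegral_mono fun x => lintegral_mono fun y => ENNReal.ofReal_le_ofReal (hFle x y)
  have hIfin : (∫⁻ x, ∫⁻ y, ENNReal.ofReal (Fker N s p U w x y)) ≠ ⊤ :=
    (lt_of_le_of_lt hIle (lt_top_iff_ne_top.2 hUg)).ne
  have hφm : Measurable fun x => ∫⁻ y, ENNReal.ofReal (Fker N s p U w x y) :=
    Measurable.lintegral_prod_right (ENNReal.measurable_ofReal.comp hFm)
  have haefin : ∀ᵐ x, (∫⁻ y, ENNReal.ofReal (Fker N s p U w x y)) < ⊤ := ae_lt_top hφm hIfin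
  have hrep : ∀ x, (∫ y, Fker N s p U w x y) = (∫⁻ y, ENNReal.ofReal (Fker N s p U w x y)).toReal :=
    fun x => integral_eq_lintegral_of_nonneg_ae (ae_of_all _ fun y => hF0 x y)
      (hFm.of_uncurry_left.aestronglyMeasurable)
  have hI0 : (∫⁻ x, ∫⁻ y, ENNReal.ofReal (Fker N s p U w x y)) = 0 := by
    have h1 : (∫⁻ x, ∫⁻ y, ENNReal.ofReal (Fker N s p U w x y)).toReal = 0 := by
      rw [← integral_toReal hφm.aemeasurable haefin]
      rw [← happ]
      exact integral_congr_ae (ae_of_all _ fun x => (hrep x).symm)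
    rcases (ENNReal.toReal_eq_zero_iff _).1 h1 with h | h
    · exact h
    · exact absurd h hIfin
  have hae : ∀ᵐ x, (∫⁻ y, ENNReal.ofReal (Fker N s p U w x y)) = 0 := by
    have := (lintegral_eq_zero_iff hφm).1 hI0
    filter_upwards [this] with x hx using hx
  -- geometric setup
  set a : ℝ := U x0 - U z - t with ha
  have ha0 : 0 < a := by simp only [ha]; linarith
  obtain ⟨δ1, hδ1, hball1⟩ := Metric.continuous_iff.1 hUcont x0 (a/2) (by linarith)
  obtain ⟨δ2, hδ2, hball2⟩ := Metric.continuous_iff.1 hUcont z (t/2) (by linarith)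
  -- pick a good point x in ball x0 δ1
  obtain ⟨x, hxball, hxint⟩ :
      ∃ x ∈ ball x0 δ1, (∫⁻ y, ENNReal.ofReal (Fker N s p U w x y)) = 0 := by
    by_contra hno
    push_neg at hno
    have hsub : ball x0 δ1 ⊆ {x | ¬ (∫⁻ y, ENNReal.ofReal (Fker N s p U w x y)) = 0} :=
      fun x hx => hno x hx
    have hnull := measure_mono_null hsub (by rw [ae_iff] at hae; exact hae)
    exact absurd hnull (measure_ball_pos volume x0 hδ1).ne'
  have hFy : ∀ᵐ y, ENNReal.ofReal (Fker N s p U w x y) = 0 := by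
    have := (lintegral_eq_zero_iff (ENNReal.measurable_ofReal.comp hFm.of_uncurry_left)).1 hxint
    filter_upwards [this] with y hy using hy
  -- all y in ball z δ2 give a positive integrand : contradiction
  have hUx : U z + t + a/2 < U x := by
    have := hball1 x hxball
    rw [Real.dist_eq] at this
    have h2 := abs_lt.1 this
    simp only [ha] at *
    linarith [h2.1, h2.2]
  have hpos : ∀ y ∈ ball z δ2, 0 < Fker N s p U w x y := by
    intro y hy
    have hy2 := hball2 y hy
    rw [Real.dist_eq] at hy2
    have hy3 := abs_lt.1 hy2
    have hd : 0 < U x - U y := by linarith [hy3.1, hy3.2]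
    have hxy : x ≠ y := fun hxy => by rw [hxy] at hd; linarith
    have hwy : w y = 0 := max_eq_right (by simp only [hc]; linarith [hy3.2])
    have hwx : 0 < w x := lt_of_lt_of_le (by simp only [hc]; linarith) (le_max_left _ _)
    unfold Fker
    apply div_pos
    · apply _root_.mul_pos
      · exact _root_.mul_pos (Real.rpow_pos_of_pos (abs_pos.2 hd.ne') _) hd
      · rw [hwy]; linarith
    · exact Real.rpow_pos_of_pos (norm_pos_iff.2 (sub_ne_zero.2 hxy)) _
  have hsub2 : ball z δ2 ⊆ {y | ¬ ENNReal.ofReal (Fker N s p U w x y) = 0} := by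
    intro y hy
    simp only [mem_setOf_eq]
    exact fun h0 => absurd (ENNReal.ofReal_pos.2 (hpos y hy)) (by rw [h0]; simp)
  have hnull2 := measure_mono_null hsub2 (by rw [ae_iff] at hFy; exact hFy)
  exact absurd hnull2 (measure_ball_pos volume z hδ2).ne'

lemma gag_neg {N : ℕ} {s p : ℝ} {U : Euc N → ℝ} :
    gagliardoP Set.univ s p (fun x => -U x) = gagliardoP Set.univ s p U := by
  unfold gagliardoP
  refine lintegral_congr fun x => lintegral_congr fun y => ?_
  rw [show -U x - -U y = -(U x - U y) by ring, abs_neg]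

lemma holder_neg {N : ℕ} {α : ℝ} {U : Euc N → ℝ} :
    holderSemi Set.univ α (fun x => -U x) = holderSemi Set.univ α U := by
  unfold holderSemi
  refine iSup_congr fun x => iSup_congr fun y => iSup_congr fun h => ?_
  rw [show -U x.1 - -U y.1 = -(U x.1 - U y.1) by ring, abs_neg]

end Aux18

/-- Global boundedness and `sup = max over the support of the datum` for weak
solutions of `(-Δ_p)^s U = μ` with `μ` a compactly supported finite signed
measure (written as `μ = μp - μm`). -/
theorem stmt_18 (N : ℕ) (hN : 1 ≤ N) (s p : ℝ) (hs0 : 0 < s) (hs1 : s < 1)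
    (hp : 1 < p) (hsp : (N : ℝ) < s * p)
    (K : Set (Euc N)) (hK : IsCompact K)
    (μp μm : Measure (Euc N)) [IsFiniteMeasure μp] [IsFiniteMeasure μm]
    (hμp : μp Kᶜ = 0) (hμm : μm Kᶜ = 0)
    (U : Euc N → ℝ)
    (hUg : gagliardoP Set.univ s p U ≠ ⊤)
    (hUh : holderSemi Set.univ (s - N / p) U ≠ ⊤)
    (hweak : ∀ φ : Euc N → ℝ, gagliardoP Set.univ s p φ ≠ ⊤ →
      holderSemi Set.univ (s - N / p) φ ≠ ⊤ →
      (∫ x, ∫ y, (|U x - U y| ^ (p - 2) * (U x - U y)) * (φ x - φ y) /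
          ‖x - y‖ ^ ((N : ℝ) + s * p)) =
        (∫ x, φ x ∂μp) - ∫ x, φ x ∂μm) :
    (∃ M : ℝ, ∀ x, |U x| ≤ M) ∧
      ∀ z x : Euc N, |U x - U z| ≤ sSup ((fun w => |U w - U z|) '' K) := by
  have hp0 : (0:ℝ) < p := lt_trans one_pos hp
  have hα : 0 < s - N / p := by rw [sub_pos, div_lt_iff₀ hp0]; exact hsp
  have hUcont : Continuous U := Aux18.holder_cont hα hUh
  have main : ∀ z x : Euc N, |U x - U z| ≤ sSup ((fun w => |U w - U z|) '' K) := by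
    intro z x
    set S := sSup ((fun w => |U w - U z|) '' K) with hS
    have hbdd : BddAbove ((fun w => |U w - U z|) '' K) :=
      (hK.image (by continuity)).bddAbove
    have hS0 : 0 ≤ S := by
      rcases K.eq_empty_or_nonempty with rfl | ⟨k, hk⟩
      · simp only [hS, image_empty]
        rw [Real.sSup_empty]
      · exact le_trans (abs_nonneg _) (le_csSup hbdd ⟨k, hk, rfl⟩)
    have key : ∀ ε, 0 < ε → |U x - U z| ≤ S + ε := by
      intro ε hε
      have ht : 0 < S + ε := by linarith
      have hKt : ∀ k ∈ K, U k - U z ≤ S + ε := fun k hk =>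
        le_trans (le_abs_self _) (le_trans (le_csSup hbdd ⟨k, hk, rfl⟩) (by linarith))
      have h1 : U x - U z ≤ S + ε :=
        Aux18.oneSide hs0 hp hsp hμp hμm hUg hUh hweak z (S + ε) ht hKt x
      have hVg : gagliardoP Set.univ s p (fun x => -U x) ≠ ⊤ := by
        rw [Aux18.gag_neg]; exact hUg
      have hVh : holderSemi Set.univ (s - N / p) (fun x => -U x) ≠ ⊤ := by
        rw [Aux18.holder_neg]; exact hUh
      have hVweak : ∀ φ : Euc N → ℝ, gagliardoP Set.univ s p φ ≠ ⊤ →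
          holderSemi Set.univ (s - N / p) φ ≠ ⊤ →
          (∫ x', ∫ y', (|(-U x') - (-U y')| ^ (p - 2) * ((-U x') - (-U y'))) * (φ x' - φ y') /
              ‖x' - y'‖ ^ ((N : ℝ) + s * p)) =
            (∫ x', φ x' ∂μm) - ∫ x', φ x' ∂μp := by
        intro φ hg hh
        have h := hweak φ hg hh
        have heq : ∀ x' y' : Euc N,
            (|(-U x') - (-U y')| ^ (p - 2) * ((-U x') - (-U y'))) * (φ x' - φ y') /
              ‖x' - y'‖ ^ ((N : ℝ) + s * p) =
            -((|U x' - U y'| ^ (p - 2) * (U x' - U y')) * (φ x' - φ y') /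
              ‖x' - y'‖ ^ ((N : ℝ) + s * p)) := by
          intro x' y'
          rw [show (-U x') - (-U y') = -(U x' - U y') by ring, abs_neg]
          ring
        simp only [heq, integral_neg]
        rw [h]
        ring
      have hKt' : ∀ k ∈ K, (-U k) - (-U z) ≤ S + ε := by
        intro k hk
        have h3 := abs_le.1 (le_csSup hbdd ⟨k, hk, rfl⟩ : |U k - U z| ≤ S)
        linarith [h3.1]
      have h2 : (-U x) - (-U z) ≤ S + ε :=
        Aux18.oneSide hs0 hp hsp hμm hμp hVg hVh hVweak z (S + ε) ht hKt' x
      rw [abs_sub_le_iff]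
      exact ⟨h1, by linarith⟩
    exact le_of_forall_pos_le_add key
  refine ⟨⟨|U 0| + sSup ((fun w => |U w - U 0|) '' K), fun x => ?_⟩, main⟩
  have h := main 0 x
  calc |U x| = |U x - U 0 + U 0| := by ring_nf
  _ ≤ |U x - U 0| + |U 0| := abs_add_le _ _
  _ ≤ _ := by linarith
end
end
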